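/- arXiv:2602.14815 — 14 statements merged into one kernel-verified Lean document; each statement's English description precedes it below -/
import Mathlib

section
/- Let the market consist of n buyers and m divisible goods, where buyer i has budget B_i ≥ 0 and per-unit valuation v_{ij} ≥ 0 for good j. If (x, b, p, α) is a First-Price Pacing Equilibrium of this market and (x*, b*) is any variable-price feasible solution, then the FPPE revenue satisfies Σ_{i=1}^n Σ_{j=1}^m p_j·x_{ij} ≥ (1/2)·Σ_{i=1}^n Σ_{j=1}^m b*_{ij}. In particular, FPPE extracts at least half of the optimal revenue of the revenue-maximization linear program with variable unit prices (RMVUP). -/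
open Finset

/-- A First-Price Pacing Equilibrium for a market with `n` buyers (budgets `B`,
valuations `v`) and `m` divisible goods: allocations `x`, payments `b`, prices `p`,
pacing multipliers `α`. -/
def IsFPPE {n m : ℕ} (B : Fin n → ℝ) (v : Fin n → Fin m → ℝ)
    (x b : Fin n → Fin m → ℝ) (p : Fin m → ℝ) (α : Fin n → ℝ) : Prop :=
  (∀ i j, 0 ≤ x i j) ∧
  (∀ j, 0 ≤ p j) ∧
  (∀ i, 0 ≤ α i ∧ α i ≤ 1) ∧
  (∀ i j, b i j = p j * x i j) ∧
  (∀ j, ∑ i, x i j ≤ 1) ∧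
  (∀ i, ∑ j, p j * x i j ≤ B i) ∧
  (∀ i j, 0 < x i j → p j = α i * v i j) ∧
  (∀ i j, α i * v i j ≤ p j) ∧
  (∀ j, ∃ i, p j = α i * v i j) ∧
  (∀ j, 0 < p j → ∑ i, x i j = 1) ∧
  (∀ i, ∑ j, p j * x i j < B i → α i = 1)

/-- A variable-price feasible solution: allocations `x`, buyer-specific payments `b`. -/
def VarPriceFeasible {n m : ℕ} (B : Fin n → ℝ) (v : Fin n → Fin m → ℝ)
    (x b : Fin n → Fin m → ℝ) : Prop :=
  (∀ i j, 0 ≤ x i j) ∧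
  (∀ i j, 0 ≤ b i j) ∧
  (∀ j, ∑ i, x i j ≤ 1) ∧
  (∀ i, ∑ j, b i j ≤ B i) ∧
  (∀ i j, b i j ≤ v i j * x i j)

/-- FPPE extracts at least half of the revenue of any variable-price feasible
solution, in particular at least half of the optimal revenue of RMVUP. -/
theorem fppe_half_of_rmvup {n m : ℕ} (B : Fin n → ℝ) (v : Fin n → Fin m → ℝ)
    (hB : ∀ i, 0 ≤ B i) (hv : ∀ i j, 0 ≤ v i j)
    (x b : Fin n → Fin m → ℝ) (p : Fin m → ℝ) (α : Fin n → ℝ)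
    (hfppe : IsFPPE B v x b p α)
    (xstar bstar : Fin n → Fin m → ℝ)
    (hstar : VarPriceFeasible B v xstar bstar) :
    ∑ i, ∑ j, p j * x i j ≥ (1 / 2) * ∑ i, ∑ j, bstar i j := by
  obtain ⟨hx, hp, hα, hb, hsup, hbud, hpos, hmax, hexist, hfull, hunspent⟩ := hfppe
  obtain ⟨hx', hb', hsup', hbud', hval'⟩ := hstar
  set REV := ∑ i, ∑ j, p j * x i j with hREV
  have key : ∀ i, ∑ j, bstar i j ≤ (∑ j, p j * x i j) + ∑ j, p j * xstar i j := by
    intro i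
    by_cases h : ∑ j, p j * x i j < B i
    · have hα1 := hunspent i h
      have h1 : ∑ j, bstar i j ≤ ∑ j, p j * xstar i j := by
        apply Finset.sum_le_sum
        intro j _
        calc bstar i j ≤ v i j * xstar i j := hval' i j
          _ ≤ p j * xstar i j := by
            apply mul_le_mul_of_nonneg_right _ (hx' i j)
            have := hmax i j
            rwa [hα1, one_mul] at this
      have h2 : 0 ≤ ∑ j, p j * x i j :=
        Finset.sum_nonneg fun j _ => mul_nonneg (hp j) (hx i j)
      linarith
    · push_neg at h
      have h1 : ∑ j, bstar i j ≤ B i := hbud' i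
      have h2 : 0 ≤ ∑ j, p j * xstar i j :=
        Finset.sum_nonneg fun j _ => mul_nonneg (hp j) (hx' i j)
      have h3 := hbud i
      linarith
  have sumprices : ∑ j, p j = REV := by
    rw [hREV, Finset.sum_comm]
    apply Finset.sum_congr rfl
    intro j _
    rcases eq_or_lt_of_le (hp j) with h | h
    · simp [← h]
    · rw [← Finset.mul_sum, hfull j h, mul_one]
  have h3 : ∑ i, ∑ j, bstar i j ≤ REV + ∑ i, ∑ j, p j * xstar i j := by
    calc ∑ i, ∑ j, bstar i j ≤ ∑ i, ((∑ j, p j * x i j) + ∑ j, p j * xstar i j) :=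
          Finset.sum_le_sum fun i _ => key i
      _ = REV + ∑ i, ∑ j, p j * xstar i j := by rw [Finset.sum_add_distrib]
  have h4 : ∑ i, ∑ j, p j * xstar i j ≤ ∑ j, p j := by
    rw [Finset.sum_comm]
    apply Finset.sum_le_sum
    intro j _
    rw [← Finset.mul_sum]
    calc p j * ∑ i, xstar i j ≤ p j * 1 :=
          mul_le_mul_of_nonneg_left (hsup' j) (hp j)
      _ = p j := mul_one _
  rw [ge_iff_le]
  linarith [sumprices]
end

section
/- Let (x, b, p, α) be a First-Price Pacing Equilibrium of a market with n buyers and m divisible goods, and let o* be any allocation with o*_{ij} ≥ 0 and Σ_i o*_{ij} ≤ 1 for every good j. Then the Liquid Social Welfare of the FPPE allocation satisfies LW(x) ≥ (1/2)·LW(o*). -/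
open Finset

/-- Liquid Social Welfare of an allocation. -/
def LW {n m : ℕ} (B : Fin n → ℝ) (v : Fin n → Fin m → ℝ)
    (x : Fin n → Fin m → ℝ) : ℝ :=
  ∑ i, min (∑ j, v i j * x i j) (B i)

/-- The Liquid Social Welfare of the FPPE allocation is at least half the Liquid
Social Welfare of any allocation. -/
theorem fppe_liquid_welfare_half {n m : ℕ} (B : Fin n → ℝ) (v : Fin n → Fin m → ℝ)
    (hB : ∀ i, 0 ≤ B i) (hv : ∀ i j, 0 ≤ v i j)
    (x b : Fin n → Fin m → ℝ) (p : Fin m → ℝ) (α : Fin n → ℝ)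
    (hfppe : IsFPPE B v x b p α)
    (ostar : Fin n → Fin m → ℝ)
    (hopos : ∀ i j, 0 ≤ ostar i j)
    (hosupply : ∀ j, ∑ i, ostar i j ≤ 1) :
    LW B v x ≥ (1 / 2) * LW B v ostar := by
  obtain ⟨hx, hp, hα, hb, hsupply, hbudget, hcomp, hmax, _hex, hsell, hfull⟩ := hfppe
  set S := Finset.univ.filter (fun i => α i < 1) with hS
  -- per-buyer revenue is at most the min term
  have hrev : ∀ i, ∑ j, p j * x i j ≤ min (∑ j, v i j * x i j) (B i) := by
    intro i
    refine le_min ?_ (hbudget i)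
    apply Finset.sum_le_sum
    intro j _
    rcases lt_or_eq_of_le (hx i j) with hpos | hz
    · have h1 := hcomp i j hpos
      have h2 := (hα i).2
      nlinarith [mul_nonneg (mul_nonneg (sub_nonneg.mpr h2) (hv i j)) (le_of_lt hpos)]
    · rw [← hz]; simp
  -- LW(x) ≥ total revenue = ∑ p j
  have hLWx_rev : ∑ j, p j ≤ LW B v x := by
    have heq : ∑ j, p j = ∑ i, ∑ j, p j * x i j := by
      rw [Finset.sum_comm]
      apply Finset.sum_congr rfl
      intro j _
      rw [← Finset.mul_sum]
      rcases (hp j).lt_or_eq with h | h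
      · rw [hsell j h]; ring
      · rw [← h]; ring
    rw [heq, LW]
    exact Finset.sum_le_sum (fun i _ => hrev i)
  -- paced buyers spend full budget
  have hspend : ∀ i, α i < 1 → ∑ j, p j * x i j = B i := by
    intro i hi
    rcases lt_or_eq_of_le (hbudget i) with h | h
    · exact absurd (hfull i h) (ne_of_lt hi)
    · exact h
  have hmin_nonneg : ∀ i, 0 ≤ min (∑ j, v i j * x i j) (B i) := by
    intro i
    exact le_min (Finset.sum_nonneg fun j _ => mul_nonneg (hv i j) (hx i j)) (hB i)
  -- LW(x) ≥ budgets of paced buyers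
  have hLWx_S : ∑ i ∈ S, B i ≤ LW B v x := by
    rw [LW]
    calc ∑ i ∈ S, B i ≤ ∑ i ∈ S, min (∑ j, v i j * x i j) (B i) := by
          apply Finset.sum_le_sum
          intro i hi
          have hi' : α i < 1 := (Finset.mem_filter.mp hi).2
          have h := hrev i
          rw [hspend i hi'] at h
          exact h
      _ ≤ ∑ i, min (∑ j, v i j * x i j) (B i) :=
          Finset.sum_le_sum_of_subset_of_nonneg (Finset.subset_univ S)
            (fun i _ _ => hmin_nonneg i)
  -- upper bound on LW(o*)
  have hterm : ∀ i, min (∑ j, v i j * ostar i j) (B i) ≤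
      if α i < 1 then B i else ∑ j, p j * ostar i j := by
    intro i
    by_cases hi : α i < 1
    · simp [hi]
    · simp only [hi, if_false]
      refine le_trans (min_le_left _ _) ?_
      apply Finset.sum_le_sum
      intro j _
      have hα1 : α i = 1 := le_antisymm (hα i).2 (not_lt.mp hi)
      have h := hmax i j
      rw [hα1, one_mul] at h
      exact mul_le_mul_of_nonneg_right h (hopos i j)
  have hupper : LW B v ostar ≤ ∑ i ∈ S, B i + ∑ j, p j := by
    rw [LW]
    calc ∑ i, min (∑ j, v i j * ostar i j) (B i)
        ≤ ∑ i, (if α i < 1 then B i else ∑ j, p j * ostar i j) :=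
          Finset.sum_le_sum (fun i _ => hterm i)
      _ = ∑ i ∈ S, B i + ∑ i ∈ Finset.univ.filter (fun i => ¬ α i < 1),
            ∑ j, p j * ostar i j := Finset.sum_ite _ _
      _ ≤ ∑ i ∈ S, B i + ∑ j, p j := by
          gcongr
          calc ∑ i ∈ Finset.univ.filter (fun i => ¬ α i < 1), ∑ j, p j * ostar i j
              = ∑ j, ∑ i ∈ Finset.univ.filter (fun i => ¬ α i < 1), p j * ostar i j :=
                Finset.sum_comm
            _ ≤ ∑ j, p j := by
                apply Finset.sum_le_sum
                intro j _
                rw [← Finset.mul_sum]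
                have h1 : ∑ i ∈ Finset.univ.filter (fun i => ¬ α i < 1), ostar i j ≤
                    ∑ i, ostar i j :=
                  Finset.sum_le_sum_of_subset_of_nonneg (Finset.subset_univ _)
                    (fun i _ _ => hopos i j)
                nlinarith [hosupply j, hp j]
  linarith
end

section
/- Let (x, b, p, α) be a First-Price Pacing Equilibrium of a market with n buyers and m divisible goods. Then the revenue of the FPPE equals its Liquid Social Welfare: Σ_{i=1}^n Σ_{j=1}^m p_j·x_{ij} = Σ_{i=1}^n min(Σ_{j=1}^m v_{ij}·x_{ij}, B_i). -/
open Finset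

/-- The revenue of an FPPE equals its Liquid Social Welfare. -/
theorem fppe_revenue_eq_liquid_welfare {n m : ℕ}
    (B : Fin n → ℝ) (v : Fin n → Fin m → ℝ)
    (hB : ∀ i, 0 ≤ B i) (hv : ∀ i j, 0 ≤ v i j)
    (x b : Fin n → Fin m → ℝ) (p : Fin m → ℝ) (α : Fin n → ℝ)
    (hfppe : IsFPPE B v x b p α) :
    ∑ i, ∑ j, p j * x i j = ∑ i, min (∑ j, v i j * x i j) (B i) := by
  obtain ⟨hx, hp, hα, hb, hsup, hbud, hpos, hle, hmax, hsat, hfull⟩ := hfppe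
  apply Finset.sum_congr rfl
  intro i _
  have hspend_le : ∑ j, p j * x i j ≤ ∑ j, v i j * x i j := by
    apply Finset.sum_le_sum
    intro j _
    rcases eq_or_lt_of_le (hx i j) with h | h
    · rw [← h]; simp
    · rw [hpos i j h]
      have h1 : 0 ≤ v i j * x i j := mul_nonneg (hv i j) h.le
      nlinarith [(hα i).2]
  rcases lt_or_eq_of_le (hbud i) with hlt | heq
  · have hα1 := hfull i hlt
    have hsum : ∑ j, p j * x i j = ∑ j, v i j * x i j := by
      apply Finset.sum_congr rfl
      intro j _
      rcases eq_or_lt_of_le (hx i j) with h | h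
      · rw [← h]; ring
      · rw [hpos i j h, hα1, one_mul]
    rw [hsum, min_eq_left]
    linarith [hsum ▸ hlt]
  · rw [heq, min_eq_right (by linarith)]
end

section
/- For every integer n ≥ 1, consider the market with a single divisible good and n buyers, where buyer 1 has budget B_1 = n and valuation v_1 = n², and each buyer i ∈ {2,…,n} has budget B_i = 1 and valuation v_i = n. Then: (a) there exists a variable-price feasible solution of this market with revenue exactly 2n − 1 (sell a 1/n fraction to each buyer, charging buyer 1 its full budget n and every other buyer 1); and (b) every fixed-price feasible solution of this market has revenue at most n. Consequently the worst-case ratio of the optimal fixed-unit-price revenue (RMFUP) to the optimal variable-unit-price revenue (RMVUP) equals 1/2, since n/(2n−1) → 1/2 as n → ∞. -/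
open Finset Filter

/-- Budgets of the single-good lower-bound market: buyer `0` has budget `n`,
all other buyers have budget `1`. -/
def lbBudget (n : ℕ) : Fin n → ℝ := fun i => if i.val = 0 then (n : ℝ) else 1

/-- Valuations of the single-good lower-bound market: buyer `0` has valuation `n²`,
all other buyers have valuation `n`. -/
def lbVal (n : ℕ) : Fin n → ℝ := fun i => if i.val = 0 then (n : ℝ) ^ 2 else (n : ℝ)

/-- A variable-price feasible solution of a single-good market. -/
def VarFeasible1 {n : ℕ} (B v : Fin n → ℝ) (x b : Fin n → ℝ) : Prop :=
  (∀ i, 0 ≤ x i) ∧ (∀ i, 0 ≤ b i) ∧ (∑ i, x i ≤ 1) ∧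
  (∀ i, b i ≤ B i) ∧ (∀ i, b i ≤ v i * x i)

/-- A fixed-price feasible solution of a single-good market: a single unit price `p`. -/
def FixedFeasible1 {n : ℕ} (B v : Fin n → ℝ) (x b : Fin n → ℝ) (p : ℝ) : Prop :=
  VarFeasible1 B v x b ∧ 0 ≤ p ∧ ∀ i, b i = p * x i

/-- (a) There is a variable-price feasible solution of the lower-bound market with
revenue `2n - 1`; (b) every fixed-price feasible solution has revenue at most `n`;
consequently, the worst-case ratio RMFUP/RMVUP equals `1/2`, since
`n / (2n - 1) → 1/2`. -/
theorem rmfup_over_rmvup_half :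
    (∀ n : ℕ, 1 ≤ n →
      (∃ x b : Fin n → ℝ, VarFeasible1 (lbBudget n) (lbVal n) x b ∧
        ∑ i, b i = 2 * (n : ℝ) - 1) ∧
      (∀ (x b : Fin n → ℝ) (p : ℝ),
        FixedFeasible1 (lbBudget n) (lbVal n) x b p → ∑ i, b i ≤ (n : ℝ))) ∧
    Tendsto (fun n : ℕ => (n : ℝ) / (2 * (n : ℝ) - 1)) atTop (nhds (1 / 2)) := by
  constructor
  · intro n hn
    have hpos : 0 < n := hn
    have hnR : (1:ℝ) ≤ (n:ℝ) := by exact_mod_cast hn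
    have hnR0 : (0:ℝ) < (n:ℝ) := by linarith
    set c : Fin n := ⟨0, hpos⟩ with hc
    constructor
    · refine ⟨fun _ => 1 / (n:ℝ), lbBudget n, ⟨?_, ?_, ?_, ?_, ?_⟩, ?_⟩
      · intro i; positivity
      · intro i; simp only [lbBudget]; split <;> [exact le_of_lt hnR0; norm_num]
      · rw [Finset.sum_const, Finset.card_univ, Fintype.card_fin]
        rw [nsmul_eq_mul]; rw [mul_one_div, div_self (ne_of_gt hnR0)]
      · intro i; exact le_refl _
      · intro i
        simp only [lbBudget, lbVal]
        split
        · rw [pow_two, mul_one_div, mul_div_assoc, div_self (ne_of_gt hnR0), mul_one]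
        · rw [mul_one_div, div_self (ne_of_gt hnR0)]
      · have hb : ∀ i : Fin n, lbBudget n i = (if i = c then (n:ℝ) - 1 else 0) + 1 := by
          intro i
          simp only [lbBudget, Fin.ext_iff, hc]
          split <;> simp_all
        calc ∑ i, lbBudget n i
            = ∑ i, ((if i = c then (n:ℝ) - 1 else 0) + 1) := by
              exact Finset.sum_congr rfl (fun i _ => hb i)
          _ = (∑ i, if i = c then (n:ℝ) - 1 else 0) + ∑ _i : Fin n, (1:ℝ) := by
              rw [Finset.sum_add_distrib]
          _ = ((n:ℝ) - 1) + n := by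
              rw [Finset.sum_ite_eq' Finset.univ c (fun _ => (n:ℝ) - 1)]
              simp
          _ = 2 * (n:ℝ) - 1 := by ring
    · rintro x b p ⟨⟨hx0, hb0, hxsum, hbB, hbv⟩, hp0, hbp⟩
      by_cases hpn : p ≤ (n:ℝ)
      · have hx0' : 0 ≤ ∑ i, x i := Finset.sum_nonneg (fun i _ => hx0 i)
        calc ∑ i, b i = ∑ i, p * x i := Finset.sum_congr rfl (fun i _ => hbp i)
          _ = p * ∑ i, x i := by rw [Finset.mul_sum]
          _ ≤ p * 1 := by exact mul_le_mul_of_nonneg_left hxsum hp0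
          _ ≤ (n:ℝ) := by linarith
      · push_neg at hpn
        have hzero : ∀ i : Fin n, i ≠ c → b i = 0 := by
          intro i hi
          have hvi : lbVal n i = (n:ℝ) := by
            simp only [lbVal]
            rw [if_neg]
            intro h0
            exact hi (Fin.ext h0)
          have h1 : p * x i ≤ (n:ℝ) * x i := by
            have := hbv i; rw [hbp i, hvi] at this; exact this
          have hxi : x i = 0 := by nlinarith [hx0 i]
          rw [hbp i, hxi, mul_zero]
        calc ∑ i, b i = b c := by
              apply Finset.sum_eq_single c (fun i _ hi => hzero i hi)
              intro h; exact absurd (Finset.mem_univ c) h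
          _ ≤ lbBudget n c := hbB c
          _ = (n:ℝ) := by simp [lbBudget, hc]
  · have h1 : Tendsto (fun n : ℕ => (1:ℝ) / (n:ℝ)) atTop (nhds 0) :=
      tendsto_one_div_atTop_nhds_zero_nat
    have h2 : Tendsto (fun n : ℕ => 2 - 1 / (n:ℝ)) atTop (nhds 2) := by
      have := (tendsto_const_nhds (x := (2:ℝ)) (f := atTop)).sub h1
      simpa using this
    have h3 : Tendsto (fun n : ℕ => 1 / (2 - 1 / (n:ℝ))) atTop (nhds (1 / 2)) := by
      exact (tendsto_const_nhds (x := (1:ℝ))).div h2 (by norm_num)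
    refine h3.congr' ?_
    filter_upwards [eventually_ge_atTop 1] with n hn
    have hnR0 : (0:ℝ) < (n:ℝ) := by exact_mod_cast hn
    field_simp
end

section
/- Let (E_1, E_2, E_3, S) be a 3D-2-Matching instance with m = |S| triplets, and consider the constructed RMFUP market. For every fixed-price feasible solution (x, b, p) of this market there exists a fixed-price feasible solution (x̂, b̂, p̂) such that: (1) p̂_s ∈ {2/3, 1} for every good s ∈ S; (2) if p̂_s = 2/3 then good s is completely sold to its special buyer s, i.e. x̂_{s,s} = 1; (3) if p̂_s = 1 and s = (e_1, e_2, e_3) then s is completely sold to the element buyers e_1, e_2, e_3, i.e. x̂_{e_1,s} + x̂_{e_2,s} + x̂_{e_3,s} = 1; and (4) the revenue does not decrease: Σ_{i} Σ_{s} b̂_{i,s} ≥ Σ_{i} Σ_{s} b_{i,s}. -/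
open Finset

variable {α β γ : Type*}

/-- `e` is one of the three components of the triplet `s`. -/
def ElemIn : (α ⊕ β ⊕ γ) → α × β × γ → Prop
  | Sum.inl a, s => s.1 = a
  | Sum.inr (Sum.inl b), s => s.2.1 = b
  | Sum.inr (Sum.inr c), s => s.2.2 = c

/-- A 3D-2-Matching instance: every element belongs to exactly 2 triplets of `S`. -/
def TwoRegular [DecidableEq α] [DecidableEq β] [DecidableEq γ]
    (S : Finset (α × β × γ)) : Prop :=
  (∀ a : α, (S.filter fun s => s.1 = a).card = 2) ∧
  (∀ b : β, (S.filter fun s => s.2.1 = b).card = 2) ∧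
  (∀ c : γ, (S.filter fun s => s.2.2 = c).card = 2)

/-- Two triplets are element-disjoint. -/
def TripleDisjoint (s t : α × β × γ) : Prop :=
  s.1 ≠ t.1 ∧ s.2.1 ≠ t.2.1 ∧ s.2.2 ≠ t.2.2

/-- Budgets in the constructed RMFUP market: element buyers have budget `1/3`,
special buyers have budget `2/3`. -/
noncomputable def mkBudget (S : Finset (α × β × γ)) : ((α ⊕ β ⊕ γ) ⊕ {s // s ∈ S}) → ℝ
  | Sum.inl _ => 1 / 3
  | Sum.inr _ => 2 / 3

open Classical in
/-- Valuations in the constructed RMFUP market: element buyer `e` values good `s`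
at `1` if `e ∈ s` and `0` otherwise; special buyer `s` values good `s` at `2/3`
and all other goods at `0`. -/
noncomputable def mkVal (S : Finset (α × β × γ)) :
    ((α ⊕ β ⊕ γ) ⊕ {s // s ∈ S}) → {s // s ∈ S} → ℝ
  | Sum.inl e, s => if ElemIn e s.1 then 1 else 0
  | Sum.inr s', s => if s' = s then 2 / 3 else 0

/-- A fixed-price feasible solution of a market with buyers `ι` and goods `κ`. -/
def FixedPriceFeasible {ι κ : Type*} [Fintype ι] [Fintype κ]
    (B : ι → ℝ) (v : ι → κ → ℝ) (x b : ι → κ → ℝ) (p : κ → ℝ) : Prop :=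
  (∀ i s, 0 ≤ x i s) ∧ (∀ s, 0 ≤ p s) ∧ (∀ i s, b i s = p s * x i s) ∧
  (∀ s, ∑ i, x i s ≤ 1) ∧ (∀ i, ∑ s, b i s ≤ B i) ∧
  (∀ i s, b i s ≤ v i s * x i s)


/- ### Auxiliary lemmas -/

lemma sum_insert_le' {σ : Type*} [DecidableEq σ] (f : σ → ℝ) (hf : ∀ i, 0 ≤ f i)
    (a : σ) (F : Finset σ) : ∑ i ∈ insert a F, f i ≤ f a + ∑ i ∈ F, f i := by
  by_cases h : a ∈ F
  · rw [Finset.insert_eq_self.mpr h]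
    exact le_add_of_nonneg_left (hf a)
  · rw [Finset.sum_insert h]

lemma other_mem {δ : Type*} [DecidableEq δ] {F : Finset δ} (hc : F.card = 2) {x : δ}
    (hx : x ∈ F) : ∃ z ∈ F, z ≠ x ∧ ∀ w ∈ F, w = x ∨ w = z := by
  obtain ⟨u, v, huv, rfl⟩ := Finset.card_eq_two.mp hc
  rcases Finset.mem_insert.mp hx with rfl | hxv
  · refine ⟨v, by simp, fun h => huv h.symm, fun w hw => ?_⟩
    rcases Finset.mem_insert.mp hw with rfl | hw
    · exact Or.inl rfl
    · exact Or.inr (Finset.mem_singleton.mp hw)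
  · have hx' : x = v := Finset.mem_singleton.mp hxv
    subst hx'
    refine ⟨u, by simp, huv, fun w hw => ?_⟩
    rcases Finset.mem_insert.mp hw with rfl | hw
    · exact Or.inr rfl
    · exact Or.inl (Finset.mem_singleton.mp hw)

lemma greedy_indep {σ : Type*} [DecidableEq σ] [Fintype σ] (D : σ → σ → Prop)
    (hirr : ∀ s, ¬ D s s) (hsym : ∀ s t, D s t → D t s) (y : σ → ℝ) (hy0 : ∀ s, 0 ≤ y s)
    (hnb : ∀ s, 0 < y s → ∀ U : Finset σ, (∀ t ∈ U, ¬ D s t) → ∑ t ∈ U, y t ≤ 1)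
    (T : Finset σ) :
    ∃ K : Finset σ, K ⊆ T ∧ (∀ s ∈ K, ∀ t ∈ K, s ≠ t → D s t) ∧
      ∑ s ∈ T, y s ≤ K.card := by
  classical
  induction T using Finset.strongInduction with
  | _ T ih =>
    by_cases hpos : ∃ s ∈ T, 0 < y s
    · obtain ⟨s₀, hs₀T, hs₀⟩ := hpos
      have hs₀T' : s₀ ∉ T.filter (fun t => D s₀ t) := by
        simp [hirr s₀]
      have hss : T.filter (fun t => D s₀ t) ⊂ T :=
        Finset.filter_ssubset.mpr ⟨s₀, hs₀T, hirr s₀⟩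
      obtain ⟨K', hK'sub, hK'pair, hK'sum⟩ := ih _ hss
      have hs₀K' : s₀ ∉ K' := fun h => hs₀T' (hK'sub h)
      refine ⟨insert s₀ K', ?_, ?_, ?_⟩
      · intro t ht
        rcases Finset.mem_insert.mp ht with rfl | ht
        · exact hs₀T
        · exact (Finset.filter_subset _ _) (hK'sub ht)
      · have hD : ∀ u ∈ K', D s₀ u := fun u hu => (Finset.mem_filter.mp (hK'sub hu)).2
        intro s hs t ht hst
        rcases Finset.mem_insert.mp hs with rfl | hs
        · rcases Finset.mem_insert.mp ht with rfl | ht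
          · exact absurd rfl hst
          · exact hD t ht
        · rcases Finset.mem_insert.mp ht with ht' | ht
          · rw [ht']; exact hsym _ _ (hD s hs)
          · exact hK'pair s hs t ht hst
      · have hsplit := Finset.sum_filter_add_sum_filter_not T (fun t => D s₀ t) y
        have hbad : ∑ t ∈ T.filter (fun t => ¬ D s₀ t), y t ≤ 1 := by
          refine hnb s₀ hs₀ _ (fun t ht => (Finset.mem_filter.mp ht).2)
        rw [Finset.card_insert_of_notMem hs₀K']
        push_cast
        linarith
    · push_neg at hpos
      refine ⟨∅, Finset.empty_subset _, by simp, ?_⟩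
      simp only [Finset.card_empty, Nat.cast_zero]
      exact Finset.sum_nonpos fun s hs => hpos s hs


open Classical in
/-- Rounded allocation. -/
noncomputable def roundX (S : Finset (α × β × γ)) (K : Finset {s // s ∈ S}) :
    ((α ⊕ β ⊕ γ) ⊕ {s // s ∈ S}) → {s // s ∈ S} → ℝ :=
  fun i s => Sum.elim
    (fun e => if s ∈ K ∧ ElemIn e s.1 then (1/3 : ℝ) else 0)
    (fun s' => if s ∉ K ∧ s' = s then (1 : ℝ) else 0) i

open Classical in
/-- Rounded prices. -/
noncomputable def roundP (S : Finset (α × β × γ)) (K : Finset {s // s ∈ S}) :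
    {s // s ∈ S} → ℝ :=
  fun s => if s ∈ K then 1 else 2/3



section MarketAux
variable [DecidableEq α] [DecidableEq β] [DecidableEq γ] [Fintype α] [Fintype β] [Fintype γ]
variable {S : Finset (α × β × γ)}
variable {x b : ((α ⊕ β ⊕ γ) ⊕ {s // s ∈ S}) → {s // s ∈ S} → ℝ} {p : {s // s ∈ S} → ℝ}

variable [DecidableEq α] [DecidableEq β] [DecidableEq γ] [Fintype α] [Fintype β] [Fintype γ]
variable {S : Finset (α × β × γ)}
variable {x b : ((α ⊕ β ⊕ γ) ⊕ {s // s ∈ S}) → {s // s ∈ S} → ℝ} {p : {s // s ∈ S} → ℝ}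

lemma b_nonneg (hfeas : FixedPriceFeasible (mkBudget S) (mkVal S) x b p) :
    ∀ i s, 0 ≤ b i s := fun i s => by
  rw [hfeas.2.2.1 i s]; exact mul_nonneg (hfeas.2.1 s) (hfeas.1 i s)

lemma single_budget (hfeas : FixedPriceFeasible (mkBudget S) (mkVal S) x b p)
    (i : (α ⊕ β ⊕ γ) ⊕ {s // s ∈ S}) (s : {s // s ∈ S}) : b i s ≤ mkBudget S i := by
  calc b i s = ∑ t ∈ {s}, b i t := by rw [Finset.sum_singleton]
    _ ≤ ∑ t, b i t := Finset.sum_le_sum_of_subset_of_nonneg (Finset.subset_univ _)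
        (fun t _ _ => b_nonneg hfeas i t)
    _ ≤ mkBudget S i := hfeas.2.2.2.2.1 i

lemma pair_budget (hfeas : FixedPriceFeasible (mkBudget S) (mkVal S) x b p)
    (i : (α ⊕ β ⊕ γ) ⊕ {s // s ∈ S}) {s t : {s // s ∈ S}} (hst : s ≠ t) :
    b i s + b i t ≤ mkBudget S i := by
  calc b i s + b i t = ∑ u ∈ {s, t}, b i u := by rw [Finset.sum_pair hst]
    _ ≤ ∑ u, b i u := Finset.sum_le_sum_of_subset_of_nonneg (Finset.subset_univ _)
        (fun u _ _ => b_nonneg hfeas i u)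
    _ ≤ mkBudget S i := hfeas.2.2.2.2.1 i

lemma rev_eq (hfeas : FixedPriceFeasible (mkBudget S) (mkVal S) x b p)
    (s : {s // s ∈ S}) (h : 2/3 < ∑ i, b i s) :
    ∑ i, b i s = b (Sum.inl (Sum.inl s.1.1)) s
      + b (Sum.inl (Sum.inr (Sum.inl s.1.2.1))) s
      + b (Sum.inl (Sum.inr (Sum.inr s.1.2.2))) s := by
  classical
  obtain ⟨hx0, hp0, hb, hxs, hbud, hbv⟩ := hfeas
  set i₁ : (α ⊕ β ⊕ γ) ⊕ {s // s ∈ S} := Sum.inl (Sum.inl s.1.1) with hi₁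
  set i₂ : (α ⊕ β ⊕ γ) ⊕ {s // s ∈ S} := Sum.inl (Sum.inr (Sum.inl s.1.2.1)) with hi₂
  set i₃ : (α ⊕ β ⊕ γ) ⊕ {s // s ∈ S} := Sum.inl (Sum.inr (Sum.inr s.1.2.2)) with hi₃
  have hps : 2/3 < p s := by
    have h1 : ∑ i, b i s = p s * ∑ i, x i s := by
      rw [Finset.mul_sum]; exact Finset.sum_congr rfl fun i _ => hb i s
    have h2 : p s * ∑ i, x i s ≤ p s * 1 := by
      apply mul_le_mul_of_nonneg_left (hxs s) (hp0 s)
    nlinarith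
  have hzero : ∀ i ∈ (Finset.univ : Finset ((α ⊕ β ⊕ γ) ⊕ {s // s ∈ S})),
      i ∉ ({i₁, i₂, i₃} : Finset _) → b i s = 0 := by
    intro i _ hi
    simp only [Finset.mem_insert, Finset.mem_singleton, not_or] at hi
    obtain ⟨h1, h2, h3⟩ := hi
    have hb0 : 0 ≤ b i s := by rw [hb i s]; exact mul_nonneg (hp0 s) (hx0 i s)
    match i with
    | Sum.inl e =>
      have hv : mkVal S (Sum.inl e) s = 0 := by
        have hne : ¬ ElemIn e s.1 := by
          match e with
          | Sum.inl a =>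
            intro hel
            have hel' : (s : α × β × γ).1 = a := hel
            exact h1 (by rw [hi₁, hel'])
          | Sum.inr (Sum.inl c) =>
            intro hel
            have hel' : (s : α × β × γ).2.1 = c := hel
            exact h2 (by rw [hi₂, hel'])
          | Sum.inr (Sum.inr c) =>
            intro hel
            have hel' : (s : α × β × γ).2.2 = c := hel
            exact h3 (by rw [hi₃, hel'])
        simp [mkVal, hne]
      have := hbv (Sum.inl e) s
      rw [hv, zero_mul] at this
      linarith
    | Sum.inr s' =>
      by_cases hss : s' = s
      · have hv := hbv (Sum.inr s') s
        have hveq : mkVal S (Sum.inr s') s = 2/3 := by simp [mkVal, hss]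
        rw [hveq] at hv
        have hbx : b (Sum.inr s') s = p s * x (Sum.inr s') s := hb _ _
        have hx' : 0 ≤ x (Sum.inr s') s := hx0 _ _
        have hxz : x (Sum.inr s') s = 0 := by nlinarith
        rw [hbx, hxz, mul_zero]
      · have hv : mkVal S (Sum.inr s') s = 0 := by simp [mkVal, hss]
        have := hbv (Sum.inr s') s
        rw [hv, zero_mul] at this
        linarith
  have hsub : ∑ i, b i s = ∑ i ∈ ({i₁, i₂, i₃} : Finset _), b i s :=
    (Finset.sum_subset (Finset.subset_univ _) hzero).symm
  rw [hsub]
  have h12 : i₁ ≠ i₂ := by simp [hi₁, hi₂]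
  have h13 : i₁ ≠ i₃ := by simp [hi₁, hi₃]
  have h23 : i₂ ≠ i₃ := by simp [hi₂, hi₃]
  rw [Finset.sum_insert (by simp [h12, h13]), Finset.sum_insert (by simp [h23]),
    Finset.sum_singleton]
  ring


lemma budget_elem (e : α ⊕ β ⊕ γ) : mkBudget S (Sum.inl e) = 1/3 := rfl

lemma y_le_b1 (hfeas : FixedPriceFeasible (mkBudget S) (mkVal S) x b p)
    (s : {s // s ∈ S}) :
    max 0 (3 * (∑ j, b j s) - 2) ≤ 3 * b (Sum.inl (Sum.inl s.1.1)) s := by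
  apply max_le
  · have := b_nonneg hfeas (Sum.inl (Sum.inl s.1.1)) s; linarith
  · by_cases hr : 2/3 < ∑ j, b j s
    · rw [rev_eq hfeas s hr]
      have h2 := single_budget hfeas (Sum.inl (Sum.inr (Sum.inl s.1.2.1))) s
      have h3 := single_budget hfeas (Sum.inl (Sum.inr (Sum.inr s.1.2.2))) s
      rw [budget_elem] at h2 h3
      linarith
    · push_neg at hr
      have := b_nonneg hfeas (Sum.inl (Sum.inl s.1.1)) s
      linarith

lemma y_le_b2 (hfeas : FixedPriceFeasible (mkBudget S) (mkVal S) x b p)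
    (s : {s // s ∈ S}) :
    max 0 (3 * (∑ j, b j s) - 2) ≤ 3 * b (Sum.inl (Sum.inr (Sum.inl s.1.2.1))) s := by
  apply max_le
  · have := b_nonneg hfeas (Sum.inl (Sum.inr (Sum.inl s.1.2.1))) s; linarith
  · by_cases hr : 2/3 < ∑ j, b j s
    · rw [rev_eq hfeas s hr]
      have h1 := single_budget hfeas (Sum.inl (Sum.inl s.1.1)) s
      have h3 := single_budget hfeas (Sum.inl (Sum.inr (Sum.inr s.1.2.2))) s
      rw [budget_elem] at h1 h3
      linarith
    · push_neg at hr
      have := b_nonneg hfeas (Sum.inl (Sum.inr (Sum.inl s.1.2.1))) s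
      linarith

lemma y_le_b3 (hfeas : FixedPriceFeasible (mkBudget S) (mkVal S) x b p)
    (s : {s // s ∈ S}) :
    max 0 (3 * (∑ j, b j s) - 2) ≤ 3 * b (Sum.inl (Sum.inr (Sum.inr s.1.2.2))) s := by
  apply max_le
  · have := b_nonneg hfeas (Sum.inl (Sum.inr (Sum.inr s.1.2.2))) s; linarith
  · by_cases hr : 2/3 < ∑ j, b j s
    · rw [rev_eq hfeas s hr]
      have h1 := single_budget hfeas (Sum.inl (Sum.inl s.1.1)) s
      have h2 := single_budget hfeas (Sum.inl (Sum.inr (Sum.inl s.1.2.1))) s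
      rw [budget_elem] at h1 h2
      linarith
    · push_neg at hr
      have := b_nonneg hfeas (Sum.inl (Sum.inr (Sum.inr s.1.2.2))) s
      linarith

lemma nbhd_bound (hfeas : FixedPriceFeasible (mkBudget S) (mkVal S) x b p)
    (hreg : TwoRegular S) (s : {s // s ∈ S})
    (hy : 0 < max 0 (3 * (∑ j, b j s) - 2)) (U : Finset {s // s ∈ S})
    (hU : ∀ t ∈ U, ¬ TripleDisjoint (s : α × β × γ) (t : α × β × γ)) :
    ∑ t ∈ U, max 0 (3 * (∑ j, b j t) - 2) ≤ 1 := by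
  classical
  set y : {s // s ∈ S} → ℝ := fun t => max 0 (3 * (∑ j, b j t) - 2) with hydef
  have hy0 : ∀ t, 0 ≤ y t := fun t => le_max_left _ _
  have hr : 2/3 < ∑ j, b j s := by
    rcases lt_max_iff.mp hy with h | h
    · exact absurd h (lt_irrefl 0)
    · linarith
  have hys : y s = 3 * (b (Sum.inl (Sum.inl s.1.1)) s
      + b (Sum.inl (Sum.inr (Sum.inl s.1.2.1))) s
      + b (Sum.inl (Sum.inr (Sum.inr s.1.2.2))) s) - 2 := by
    rw [hydef]
    simp only []
    rw [max_eq_right (by linarith : (0:ℝ) ≤ 3 * (∑ j, b j s) - 2), rev_eq hfeas s hr]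
  -- partners
  have hsF₁ : s.1 ∈ S.filter (fun w => w.1 = s.1.1) :=
    Finset.mem_filter.mpr ⟨s.2, rfl⟩
  obtain ⟨z₁, hz₁F, hz₁ne, hcov₁⟩ := other_mem (hreg.1 s.1.1) hsF₁
  have hz₁S : z₁ ∈ S := (Finset.mem_filter.mp hz₁F).1
  have hz₁a : z₁.1 = s.1.1 := (Finset.mem_filter.mp hz₁F).2
  set t₁ : {s // s ∈ S} := ⟨z₁, hz₁S⟩ with ht₁def
  have hsF₂ : s.1 ∈ S.filter (fun w => w.2.1 = s.1.2.1) :=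
    Finset.mem_filter.mpr ⟨s.2, rfl⟩
  obtain ⟨z₂, hz₂F, hz₂ne, hcov₂⟩ := other_mem (hreg.2.1 s.1.2.1) hsF₂
  have hz₂S : z₂ ∈ S := (Finset.mem_filter.mp hz₂F).1
  have hz₂a : z₂.2.1 = s.1.2.1 := (Finset.mem_filter.mp hz₂F).2
  set t₂ : {s // s ∈ S} := ⟨z₂, hz₂S⟩ with ht₂def
  have hsF₃ : s.1 ∈ S.filter (fun w => w.2.2 = s.1.2.2) :=
    Finset.mem_filter.mpr ⟨s.2, rfl⟩
  obtain ⟨z₃, hz₃F, hz₃ne, hcov₃⟩ := other_mem (hreg.2.2 s.1.2.2) hsF₃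
  have hz₃S : z₃ ∈ S := (Finset.mem_filter.mp hz₃F).1
  have hz₃a : z₃.2.2 = s.1.2.2 := (Finset.mem_filter.mp hz₃F).2
  set t₃ : {s // s ∈ S} := ⟨z₃, hz₃S⟩ with ht₃def
  -- U is contained in {s, t₁, t₂, t₃}
  have hUM : U ⊆ insert s (insert t₁ (insert t₂ {t₃})) := by
    intro t ht
    have hnd := hU t ht
    simp only [TripleDisjoint, not_and_or, not_not] at hnd
    simp only [Finset.mem_insert, Finset.mem_singleton]
    rcases hnd with h | h | h
    · have htF : t.1 ∈ S.filter (fun w => w.1 = s.1.1) :=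
        Finset.mem_filter.mpr ⟨t.2, h.symm⟩
      rcases hcov₁ _ htF with he | he
      · exact Or.inl (Subtype.ext he)
      · exact Or.inr (Or.inl (Subtype.ext he))
    · have htF : t.1 ∈ S.filter (fun w => w.2.1 = s.1.2.1) :=
        Finset.mem_filter.mpr ⟨t.2, h.symm⟩
      rcases hcov₂ _ htF with he | he
      · exact Or.inl (Subtype.ext he)
      · exact Or.inr (Or.inr (Or.inl (Subtype.ext he)))
    · have htF : t.1 ∈ S.filter (fun w => w.2.2 = s.1.2.2) :=
        Finset.mem_filter.mpr ⟨t.2, h.symm⟩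
      rcases hcov₃ _ htF with he | he
      · exact Or.inl (Subtype.ext he)
      · exact Or.inr (Or.inr (Or.inr (Subtype.ext he)))
  have hsum1 : ∑ t ∈ U, y t ≤ ∑ t ∈ insert s (insert t₁ (insert t₂ {t₃})), y t :=
    Finset.sum_le_sum_of_subset_of_nonneg hUM (fun t _ _ => hy0 t)
  have hsum2 : ∑ t ∈ insert s (insert t₁ (insert t₂ {t₃})), y t
      ≤ y s + (y t₁ + (y t₂ + y t₃)) := by
    have A1 := sum_insert_le' y hy0 s (insert t₁ (insert t₂ {t₃}))
    have A2 := sum_insert_le' y hy0 t₁ (insert t₂ {t₃})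
    have A3 := sum_insert_le' y hy0 t₂ {t₃}
    rw [Finset.sum_singleton] at A3
    linarith
  -- bounds for the partners
  have hne₁ : s ≠ t₁ := fun he => hz₁ne (by rw [ht₁def] at he; exact (congrArg Subtype.val he).symm)
  have hne₂ : s ≠ t₂ := fun he => hz₂ne (by rw [ht₂def] at he; exact (congrArg Subtype.val he).symm)
  have hne₃ : s ≠ t₃ := fun he => hz₃ne (by rw [ht₃def] at he; exact (congrArg Subtype.val he).symm)
  have hb₁ : y t₁ ≤ 3 * b (Sum.inl (Sum.inl s.1.1)) t₁ := by
    have := y_le_b1 hfeas t₁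
    have heq : (t₁ : {s // s ∈ S}).1.1 = s.1.1 := hz₁a
    rw [heq] at this
    exact this
  have hb₂ : y t₂ ≤ 3 * b (Sum.inl (Sum.inr (Sum.inl s.1.2.1))) t₂ := by
    have := y_le_b2 hfeas t₂
    have heq : (t₂ : {s // s ∈ S}).1.2.1 = s.1.2.1 := hz₂a
    rw [heq] at this
    exact this
  have hb₃ : y t₃ ≤ 3 * b (Sum.inl (Sum.inr (Sum.inr s.1.2.2))) t₃ := by
    have := y_le_b3 hfeas t₃
    have heq : (t₃ : {s // s ∈ S}).1.2.2 = s.1.2.2 := hz₃a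
    rw [heq] at this
    exact this
  have hp₁ := pair_budget hfeas (Sum.inl (Sum.inl s.1.1)) hne₁
  have hp₂ := pair_budget hfeas (Sum.inl (Sum.inr (Sum.inl s.1.2.1))) hne₂
  have hp₃ := pair_budget hfeas (Sum.inl (Sum.inr (Sum.inr s.1.2.2))) hne₃
  rw [budget_elem] at hp₁ hp₂ hp₃
  linarith


end MarketAux

/-- Lemma 1 (rounding): every fixed-price feasible solution of the constructed
RMFUP market can be transformed into one where every price is `2/3` or `1`,
goods at price `2/3` are fully sold to their special buyer, goods at price `1`
are fully sold to their three element buyers, and the revenue does not decrease. -/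
theorem rmfup_rounding [DecidableEq α] [DecidableEq β] [DecidableEq γ]
    [Fintype α] [Fintype β] [Fintype γ]
    (S : Finset (α × β × γ)) (hreg : TwoRegular S)
    (x b : ((α ⊕ β ⊕ γ) ⊕ {s // s ∈ S}) → {s // s ∈ S} → ℝ)
    (p : {s // s ∈ S} → ℝ)
    (hfeas : FixedPriceFeasible (mkBudget S) (mkVal S) x b p) :
    ∃ (x' b' : ((α ⊕ β ⊕ γ) ⊕ {s // s ∈ S}) → {s // s ∈ S} → ℝ)
      (p' : {s // s ∈ S} → ℝ),
      FixedPriceFeasible (mkBudget S) (mkVal S) x' b' p' ∧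
      (∀ s : {s // s ∈ S}, p' s = 2 / 3 ∨ p' s = 1) ∧
      (∀ s : {s // s ∈ S}, p' s = 2 / 3 → x' (Sum.inr s) s = 1) ∧
      (∀ s : {s // s ∈ S}, p' s = 1 →
        x' (Sum.inl (Sum.inl s.1.1)) s + x' (Sum.inl (Sum.inr (Sum.inl s.1.2.1))) s +
          x' (Sum.inl (Sum.inr (Sum.inr s.1.2.2))) s = 1) ∧
      (∑ i, ∑ s, b' i s ≥ ∑ i, ∑ s, b i s) := by
    classical
  obtain ⟨K, -, hKpair, hKsum⟩ := greedy_indep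
    (fun u v : {s // s ∈ S} => TripleDisjoint (u : α × β × γ) (v : α × β × γ))
    (fun u h => h.1 rfl)
    (fun u v h => ⟨h.1.symm, h.2.1.symm, h.2.2.symm⟩)
    (fun t => max 0 (3 * (∑ j, b j t) - 2)) (fun t => le_max_left _ _)
    (fun s hs U hU => nbhd_bound hfeas hreg s hs U hU)
    Finset.univ
  -- basic computations about the rounded solution
  have hXsum : ∀ s : {s // s ∈ S}, ∑ i, roundX S K i s = 1 := by
    intro s
    rw [Fintype.sum_sum_type, Fintype.sum_sum_type]
    by_cases hs : s ∈ K
    · simp [roundX, ElemIn, hs, Finset.sum_ite_eq]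
      norm_num
    · simp [roundX, ElemIn, hs, Finset.sum_ite_eq']
  have hbudE : ∀ e : α ⊕ β ⊕ γ,
      ∑ s, roundP S K s * roundX S K (Sum.inl e) s ≤ 1/3 := by
    intro e
    have hform : ∀ s, roundP S K s * roundX S K (Sum.inl e) s
        = if s ∈ K ∧ ElemIn e s.1 then (1/3 : ℝ) else 0 := by
      intro s
      by_cases h : s ∈ K ∧ ElemIn e s.1
      · simp [roundX, roundP, h, h.1]
      · simp [roundX, roundP, h]
    have hcard : (Finset.univ.filter (fun s : {s // s ∈ S} => s ∈ K ∧ ElemIn e s.1)).card ≤ 1 := by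
      apply Finset.card_le_one.mpr
      intro u hu v hv
      simp only [Finset.mem_filter] at hu hv
      by_contra hne
      have hdis := hKpair u hu.2.1 v hv.2.1 hne
      rcases e with a | bc
      · exact hdis.1 ((hu.2.2 : (u : α × β × γ).1 = a).trans (hv.2.2 : (v : α × β × γ).1 = a).symm)
      · rcases bc with bb | cc
        · exact hdis.2.1 ((hu.2.2 : (u : α × β × γ).2.1 = bb).trans
            (hv.2.2 : (v : α × β × γ).2.1 = bb).symm)
        · exact hdis.2.2 ((hu.2.2 : (u : α × β × γ).2.2 = cc).trans
            (hv.2.2 : (v : α × β × γ).2.2 = cc).symm)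
    calc ∑ s, roundP S K s * roundX S K (Sum.inl e) s
        = ∑ s, (if s ∈ K ∧ ElemIn e s.1 then (1/3 : ℝ) else 0) :=
          Finset.sum_congr rfl (fun s _ => hform s)
      _ = ∑ s ∈ Finset.univ.filter (fun s : {s // s ∈ S} => s ∈ K ∧ ElemIn e s.1), (1/3 : ℝ) :=
          (Finset.sum_filter _ _).symm
      _ = ((Finset.univ.filter (fun s : {s // s ∈ S} => s ∈ K ∧ ElemIn e s.1)).card : ℝ) * (1/3) := by
          rw [Finset.sum_const, nsmul_eq_mul]
      _ ≤ 1/3 := by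
          have : ((Finset.univ.filter (fun s : {s // s ∈ S} => s ∈ K ∧ ElemIn e s.1)).card : ℝ) ≤ 1 := by
            exact_mod_cast hcard
          nlinarith
  have hbudS : ∀ s' : {s // s ∈ S},
      ∑ s, roundP S K s * roundX S K (Sum.inr s') s ≤ 2/3 := by
    intro s'
    have hform : ∀ s, roundP S K s * roundX S K (Sum.inr s') s
        = if s ∉ K ∧ s' = s then (2/3 : ℝ) else 0 := by
      intro s
      by_cases h : s ∉ K ∧ s' = s
      · simp [roundX, roundP, h, h.1]
      · simp [roundX, roundP, h]
    calc ∑ s, roundP S K s * roundX S K (Sum.inr s') s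
        = ∑ s, (if s ∉ K ∧ s' = s then (2/3 : ℝ) else 0) :=
          Finset.sum_congr rfl (fun s _ => hform s)
      _ ≤ ∑ s, (if s' = s then (2/3 : ℝ) else 0) := by
          refine Finset.sum_le_sum fun s _ => ?_
          by_cases h : s' = s
          · simp only [h]
            split_ifs <;> norm_num
          · simp [h]
      _ = 2/3 := by simp
  have hval : ∀ i s, roundP S K s * roundX S K i s = mkVal S i s * roundX S K i s := by
    intro i s
    rcases i with e | s'
    · by_cases h : s ∈ K ∧ ElemIn e s.1
      · simp [roundX, roundP, mkVal, h, h.1, h.2]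
      · simp [roundX, h]
    · by_cases h : s ∉ K ∧ s' = s
      · simp [roundX, roundP, mkVal, h, h.1, h.2]
      · simp [roundX, h]
  refine ⟨roundX S K, fun i s => roundP S K s * roundX S K i s, roundP S K,
    ⟨?_, ?_, fun i s => rfl, fun s => le_of_eq (hXsum s), ?_, fun i s => le_of_eq (hval i s)⟩,
    ?_, ?_, ?_, ?_⟩
  · intro i s
    rcases i with e | s' <;> · dsimp [roundX]; split_ifs <;> norm_num
  · intro s
    dsimp [roundP]; split_ifs <;> norm_num
  · intro i
    rcases i with e | s'
    · show _ ≤ (1/3 : ℝ); exact hbudE e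
    · show _ ≤ (2/3 : ℝ); exact hbudS s'
  · intro s
    by_cases h : s ∈ K
    · right; simp [roundP, h]
    · left; simp [roundP, h]
  · intro s h23
    have hs : s ∉ K := by
      intro hK
      rw [show roundP S K s = 1 by simp [roundP, hK]] at h23
      norm_num at h23
    simp [roundX, hs]
  · intro s h1
    have hs : s ∈ K := by
      by_contra hK
      rw [show roundP S K s = 2/3 by simp [roundP, hK]] at h1
      norm_num at h1
    have e1 : roundX S K (Sum.inl (Sum.inl s.1.1)) s = 1/3 := by simp [roundX, hs, ElemIn]
    have e2 : roundX S K (Sum.inl (Sum.inr (Sum.inl s.1.2.1))) s = 1/3 := by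
      simp [roundX, hs, ElemIn]
    have e3 : roundX S K (Sum.inl (Sum.inr (Sum.inr s.1.2.2))) s = 1/3 := by
      simp [roundX, hs, ElemIn]
    rw [e1, e2, e3]; norm_num
  · rw [ge_iff_le]
    have hrev' : ∑ i, ∑ s, roundP S K s * roundX S K i s = ∑ s, roundP S K s := by
      rw [Finset.sum_comm]
      refine Finset.sum_congr rfl fun s _ => ?_
      rw [← Finset.mul_sum, hXsum s, mul_one]
    have hps : ∑ s, roundP S K s
        = (∑ _s : {s // s ∈ S}, (2/3 : ℝ)) + (1/3) * K.card := by
      have hpt : ∀ s, roundP S K s = 2/3 + (if s ∈ K then (1/3 : ℝ) else 0) := by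
        intro s
        by_cases h : s ∈ K <;> simp [roundP, h] <;> norm_num
      rw [Finset.sum_congr rfl fun s _ => hpt s, Finset.sum_add_distrib]
      congr 1
      rw [Finset.sum_ite_mem, Finset.univ_inter, Finset.sum_const, nsmul_eq_mul]
      ring
    have hbound : ∀ s : {s // s ∈ S}, ∑ i, b i s
        ≤ 2/3 + (max 0 (3 * (∑ j, b j s) - 2)) / 3 := by
      intro s
      have h2 : 3 * (∑ j, b j s) - 2 ≤ max 0 (3 * (∑ j, b j s) - 2) := le_max_right _ _
      linarith
    calc ∑ i, ∑ s, b i s = ∑ s, ∑ i, b i s := Finset.sum_comm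
      _ ≤ ∑ s : {s // s ∈ S}, (2/3 + (max 0 (3 * (∑ j, b j s) - 2)) / 3) :=
          Finset.sum_le_sum (fun s _ => hbound s)
      _ = (∑ _s : {s // s ∈ S}, (2/3 : ℝ))
          + (∑ s : {s // s ∈ S}, max 0 (3 * (∑ j, b j s) - 2)) / 3 := by
          rw [Finset.sum_add_distrib, Finset.sum_div]
      _ ≤ (∑ _s : {s // s ∈ S}, (2/3 : ℝ)) + (K.card : ℝ) / 3 := by
          have := hKsum
          linarith
      _ = ∑ s, roundP S K s := by rw [hps]; ring
      _ = ∑ i, ∑ s, roundP S K s * roundX S K i s := hrev'.symm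
end

section
/- Let (E_1, E_2, E_3, S) be a 3D-2-Matching instance and let (x, b, p) be a fixed-price feasible solution of the constructed RMFUP market satisfying: p_s ∈ {2/3, 1} for every s ∈ S; if p_s = 2/3 then x_{s,s} = 1; and if p_s = 1 and s = (e_1,e_2,e_3) then x_{e_1,s} + x_{e_2,s} + x_{e_3,s} = 1. Then the set of triplets {s ∈ S : p_s = 1} is pairwise element-disjoint, i.e., it is a feasible solution of the 3D-Matching instance. -/
open Finset

variable {α β γ : Type*}

/-- The triplets priced at `1` in a rounded fixed-price feasible solution form a
feasible 3D-Matching (pairwise element-disjoint). -/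
theorem rounded_solution_gives_matching
    [DecidableEq α] [DecidableEq β] [DecidableEq γ]
    [Fintype α] [Fintype β] [Fintype γ]
    (S : Finset (α × β × γ)) (hreg : TwoRegular S)
    (x b : ((α ⊕ β ⊕ γ) ⊕ {s // s ∈ S}) → {s // s ∈ S} → ℝ)
    (p : {s // s ∈ S} → ℝ)
    (hfeas : FixedPriceFeasible (mkBudget S) (mkVal S) x b p)
    (hprice : ∀ s : {s // s ∈ S}, p s = 2 / 3 ∨ p s = 1)
    (hspecial : ∀ s : {s // s ∈ S}, p s = 2 / 3 → x (Sum.inr s) s = 1)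
    (helem : ∀ s : {s // s ∈ S}, p s = 1 →
      x (Sum.inl (Sum.inl s.1.1)) s + x (Sum.inl (Sum.inr (Sum.inl s.1.2.1))) s +
        x (Sum.inl (Sum.inr (Sum.inr s.1.2.2))) s = 1) :
    ∀ s t : {s // s ∈ S}, p s = 1 → p t = 1 → s ≠ t →
      TripleDisjoint s.1 t.1 := by
  obtain ⟨hx0, hp0, hb, hcap, hbud, hval⟩ := hfeas
  have hnn : ∀ (e : α ⊕ β ⊕ γ) (u : {s // s ∈ S}), 0 ≤ b (Sum.inl e) u := fun e u => by
    rw [hb]; exact mul_nonneg (hp0 u) (hx0 _ u)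
  -- each element buyer's allocation on a price-1 good is at most 1/3
  have hle : ∀ (u : {s // s ∈ S}) (e : α ⊕ β ⊕ γ), p u = 1 → x (Sum.inl e) u ≤ 1 / 3 := by
    intro u e hpu
    have h1 : b (Sum.inl e) u ≤ ∑ v, b (Sum.inl e) v :=
      Finset.single_le_sum (fun v _ => hnn e v) (Finset.mem_univ u)
    have h2 := hbud (Sum.inl e)
    simp only [mkBudget] at h2
    rw [hb, hpu, one_mul] at h1
    linarith
  -- hence each of the three allocations on a price-1 good equals 1/3
  have heq : ∀ u : {s // s ∈ S}, p u = 1 →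
      x (Sum.inl (Sum.inl u.1.1)) u = 1 / 3 ∧
      x (Sum.inl (Sum.inr (Sum.inl u.1.2.1))) u = 1 / 3 ∧
      x (Sum.inl (Sum.inr (Sum.inr u.1.2.2))) u = 1 / 3 := by
    intro u hpu
    have h1 := hle u (Sum.inl u.1.1) hpu
    have h2 := hle u (Sum.inr (Sum.inl u.1.2.1)) hpu
    have h3 := hle u (Sum.inr (Sum.inr u.1.2.2)) hpu
    have hs := helem u hpu
    exact ⟨by linarith, by linarith, by linarith⟩
  intro s t hps hpt hst
  have contra : ∀ e : α ⊕ β ⊕ γ,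
      x (Sum.inl e) s = 1 / 3 → x (Sum.inl e) t = 1 / 3 → False := by
    intro e h1 h2
    have hpair : b (Sum.inl e) s + b (Sum.inl e) t ≤ ∑ u, b (Sum.inl e) u := by
      have h := Finset.sum_le_sum_of_subset_of_nonneg
        (Finset.subset_univ ({s, t} : Finset {s // s ∈ S}))
        (fun u _ _ => hnn e u)
      rwa [Finset.sum_pair hst] at h
    have hB := hbud (Sum.inl e)
    simp only [mkBudget] at hB
    rw [hb, hb, hps, hpt, one_mul, one_mul, h1, h2] at hpair
    linarith
  obtain ⟨hs1, hs2, hs3⟩ := heq s hps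
  obtain ⟨ht1, ht2, ht3⟩ := heq t hpt
  refine ⟨fun h => ?_, fun h => ?_, fun h => ?_⟩
  · exact contra (Sum.inl s.1.1) hs1 (by rw [h]; exact ht1)
  · exact contra (Sum.inr (Sum.inl s.1.2.1)) hs2 (by rw [h]; exact ht2)
  · exact contra (Sum.inr (Sum.inr s.1.2.2)) hs3 (by rw [h]; exact ht3)
end

section
/- Let (E_1, E_2, E_3, S) be a 3D-2-Matching instance with m = |S| triplets, let M* be a maximum-cardinality feasible 3D-Matching solution, and let ρ ∈ [8/9, 1]. Let (x, b, p) be a fixed-price feasible solution of the constructed RMFUP market satisfying the rounded form (p_s ∈ {2/3,1}; p_s = 2/3 implies x_{s,s} = 1; p_s = 1 with s = (e_1,e_2,e_3) implies x_{e_1,s} + x_{e_2,s} + x_{e_3,s} = 1) whose revenue is at least ρ times the revenue of every fixed-price feasible solution of that market. Then the feasible 3D-Matching solution M̂ := {s ∈ S : p_s = 1} satisfies |M̂| ≥ (9ρ − 8)·|M*|. -/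
open Finset

variable {α β γ : Type*}

/-- A feasible 3D-Matching solution: a subset of `S` of pairwise element-disjoint triplets. -/
def IsMatching (S M : Finset (α × β × γ)) : Prop :=
  M ⊆ S ∧ ∀ s ∈ M, ∀ t ∈ M, s ≠ t → TripleDisjoint s t

open Classical in
lemma card_le_four_mul_matching [DecidableEq α] [DecidableEq β] [DecidableEq γ]
    (S : Finset (α × β × γ)) (hreg : TwoRegular S)
    (Mstar : Finset (α × β × γ)) (hMstar : IsMatching S Mstar)
    (hMax : ∀ M : Finset (α × β × γ), IsMatching S M → M.card ≤ Mstar.card) :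
    S.card ≤ 4 * Mstar.card := by
  obtain ⟨hreg1, hreg2, hreg3⟩ := hreg
  have hcover : ∀ s ∈ S, ∃ t ∈ Mstar, ¬ TripleDisjoint s t := by
    intro s hs
    by_contra h
    push_neg at h
    have hsM : s ∉ Mstar := fun hm => (h s hm).1 rfl
    have hmatch : IsMatching S (insert s Mstar) := by
      refine ⟨Finset.insert_subset hs hMstar.1, ?_⟩
      intro u hu v hv hne
      rcases Finset.mem_insert.1 hu with hu' | hu'
      · rcases Finset.mem_insert.1 hv with hv' | hv'
        · exact absurd (hu'.trans hv'.symm) hne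
        · subst hu'; exact h v hv'
      · rcases Finset.mem_insert.1 hv with hv' | hv'
        · subst hv'
          obtain ⟨h1, h2, h3⟩ := h u hu'
          exact ⟨h1.symm, h2.symm, h3.symm⟩
        · exact hMstar.2 u hu' v hv' hne
    have := hMax _ hmatch
    rw [Finset.card_insert_of_notMem hsM] at this
    omega
  have hsub : S ⊆ Mstar.biUnion (fun t => S.filter fun s => ¬ TripleDisjoint s t) := by
    intro s hs
    obtain ⟨t, ht, hnd⟩ := hcover s hs
    exact Finset.mem_biUnion.2 ⟨t, ht, Finset.mem_filter.2 ⟨hs, hnd⟩⟩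
  calc S.card ≤ _ := Finset.card_le_card hsub
    _ ≤ ∑ t ∈ Mstar, (S.filter fun s => ¬ TripleDisjoint s t).card :=
        Finset.card_biUnion_le
    _ ≤ ∑ _t ∈ Mstar, 4 := by
        refine Finset.sum_le_sum fun t ht => ?_
        have htS : t ∈ S := hMstar.1 ht
        have ht1 : t ∈ S.filter fun s => s.1 = t.1 := Finset.mem_filter.2 ⟨htS, rfl⟩
        have ht2 : t ∈ S.filter fun s => s.2.1 = t.2.1 := Finset.mem_filter.2 ⟨htS, rfl⟩
        have ht3 : t ∈ S.filter fun s => s.2.2 = t.2.2 := Finset.mem_filter.2 ⟨htS, rfl⟩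
        have hsub2 : (S.filter fun s => ¬ TripleDisjoint s t) ⊆
            insert t ((((S.filter fun s => s.1 = t.1).erase t) ∪
              ((S.filter fun s => s.2.1 = t.2.1).erase t)) ∪
              ((S.filter fun s => s.2.2 = t.2.2).erase t)) := by
          intro s hsm
          obtain ⟨hsS, hnd⟩ := Finset.mem_filter.1 hsm
          by_cases hst : s = t
          · exact Finset.mem_insert.2 (Or.inl hst)
          · refine Finset.mem_insert.2 (Or.inr ?_)
            have hor : s.1 = t.1 ∨ s.2.1 = t.2.1 ∨ s.2.2 = t.2.2 := by
              by_contra hc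
              push_neg at hc
              exact hnd ⟨hc.1, hc.2.1, hc.2.2⟩
            rcases hor with h1 | h2 | h3
            · exact Finset.mem_union.2 (Or.inl (Finset.mem_union.2 (Or.inl
                (Finset.mem_erase.2 ⟨hst, Finset.mem_filter.2 ⟨hsS, h1⟩⟩))))
            · exact Finset.mem_union.2 (Or.inl (Finset.mem_union.2 (Or.inr
                (Finset.mem_erase.2 ⟨hst, Finset.mem_filter.2 ⟨hsS, h2⟩⟩))))
            · exact Finset.mem_union.2 (Or.inr
                (Finset.mem_erase.2 ⟨hst, Finset.mem_filter.2 ⟨hsS, h3⟩⟩))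
        calc (S.filter fun s => ¬ TripleDisjoint s t).card
            ≤ _ := Finset.card_le_card hsub2
          _ ≤ _ + 1 := Finset.card_insert_le _ _
          _ ≤ 4 := by
              have e1 := Finset.card_erase_of_mem ht1
              have e2 := Finset.card_erase_of_mem ht2
              have e3 := Finset.card_erase_of_mem ht3
              rw [hreg1 t.1] at e1
              rw [hreg2 t.2.1] at e2
              rw [hreg3 t.2.2] at e3
              have := Finset.card_union_le
                ((((S.filter fun s => s.1 = t.1).erase t) ∪
                  ((S.filter fun s => s.2.1 = t.2.1).erase t)))
                ((S.filter fun s => s.2.2 = t.2.2).erase t)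
              have := Finset.card_union_le ((S.filter fun s => s.1 = t.1).erase t)
                ((S.filter fun s => s.2.1 = t.2.1).erase t)
              omega
    _ = 4 * Mstar.card := by rw [Finset.sum_const, smul_eq_mul, mul_comm]


open Classical in
noncomputable def bmPrice (S Mstar : Finset (α × β × γ)) : {s // s ∈ S} → ℝ :=
  fun s => if (s : α × β × γ) ∈ Mstar then 1 else 2/3

open Classical in
noncomputable def bmAlloc (S Mstar : Finset (α × β × γ)) :
    ((α ⊕ β ⊕ γ) ⊕ {s // s ∈ S}) → {s // s ∈ S} → ℝ
  | Sum.inl e, s => if ElemIn e s.1 ∧ (s : α × β × γ) ∈ Mstar then 1/3 else 0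
  | Sum.inr t, s => if t = s ∧ (s : α × β × γ) ∉ Mstar then 1 else 0

noncomputable def bmPay (S Mstar : Finset (α × β × γ)) :
    ((α ⊕ β ⊕ γ) ⊕ {s // s ∈ S}) → {s // s ∈ S} → ℝ :=
  fun i s => bmPrice S Mstar s * bmAlloc S Mstar i s


open Classical in
/-- Lemma 2: a rounded `ρ`-approximate fixed-price feasible solution of the
constructed RMFUP market yields a `(9ρ − 8)`-approximate 3D-2-Matching. -/
theorem rounded_solution_approx_matching
    [DecidableEq α] [DecidableEq β] [DecidableEq γ]
    [Fintype α] [Fintype β] [Fintype γ]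
    (S : Finset (α × β × γ)) (hreg : TwoRegular S)
    (Mstar : Finset (α × β × γ)) (hMstar : IsMatching S Mstar)
    (hMax : ∀ M : Finset (α × β × γ), IsMatching S M → M.card ≤ Mstar.card)
    (ρ : ℝ) (hρ₁ : 8 / 9 ≤ ρ) (hρ₂ : ρ ≤ 1)
    (x b : ((α ⊕ β ⊕ γ) ⊕ {s // s ∈ S}) → {s // s ∈ S} → ℝ)
    (p : {s // s ∈ S} → ℝ)
    (hfeas : FixedPriceFeasible (mkBudget S) (mkVal S) x b p)
    (hprice : ∀ s : {s // s ∈ S}, p s = 2 / 3 ∨ p s = 1)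
    (hspecial : ∀ s : {s // s ∈ S}, p s = 2 / 3 → x (Sum.inr s) s = 1)
    (helem : ∀ s : {s // s ∈ S}, p s = 1 →
      x (Sum.inl (Sum.inl s.1.1)) s + x (Sum.inl (Sum.inr (Sum.inl s.1.2.1))) s +
        x (Sum.inl (Sum.inr (Sum.inr s.1.2.2))) s = 1)
    (happrox : ∀ (x' b' : ((α ⊕ β ⊕ γ) ⊕ {s // s ∈ S}) → {s // s ∈ S} → ℝ)
      (p' : {s // s ∈ S} → ℝ),
      FixedPriceFeasible (mkBudget S) (mkVal S) x' b' p' →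
      ∑ i, ∑ s, b i s ≥ ρ * ∑ i, ∑ s, b' i s) :
    ((Finset.univ.filter fun s : {s // s ∈ S} => p s = 1).card : ℝ) ≥
      (9 * ρ - 8) * (Mstar.card : ℝ) := by
  classical
  obtain ⟨hx0, hp0, hb, hxle, hbud, hbv⟩ := hfeas
  set k := (Finset.univ.filter fun s : {s // s ∈ S} => p s = 1).card with hk
  have hm4 : S.card ≤ 4 * Mstar.card :=
    card_le_four_mul_matching S hreg Mstar hMstar hMax
  have hcardS : (Finset.univ : Finset {s // s ∈ S}).card = S.card := by
    simp [Fintype.card_coe]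
  -- upper bound on revenue of the given solution
  have hub : ∑ i, ∑ s, b i s ≤ 2/3 * (S.card : ℝ) + 1/3 * (k : ℝ) := by
    rw [Finset.sum_comm]
    have h1 : ∀ s : {s // s ∈ S}, ∑ i, b i s ≤ p s := by
      intro s
      have h2 : ∑ i, b i s = p s * ∑ i, x i s := by
        rw [Finset.mul_sum]; exact Finset.sum_congr rfl fun i _ => hb i s
      rw [h2]
      calc p s * ∑ i, x i s ≤ p s * 1 := mul_le_mul_of_nonneg_left (hxle s) (hp0 s)
        _ = p s := mul_one _
    calc ∑ s, ∑ i, b i s ≤ ∑ s : {s // s ∈ S}, p s := Finset.sum_le_sum fun s _ => h1 s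
      _ = ∑ s : {s // s ∈ S}, (2/3 + 1/3 * (if p s = 1 then (1:ℝ) else 0)) := by
          refine Finset.sum_congr rfl fun s _ => ?_
          rcases hprice s with h | h <;> rw [h] <;> norm_num
      _ = 2/3 * (S.card : ℝ) + 1/3 * (k : ℝ) := by
          rw [Finset.sum_add_distrib, Finset.sum_const, ← Finset.mul_sum,
            Finset.sum_boole, hcardS, hk]
          push_cast
          ring
  -- the benchmark solution built from Mstar
  have hsum1 : ∀ s : {s // s ∈ S}, ∑ i, bmAlloc S Mstar i s = 1 := by
    intro s
    rw [Fintype.sum_sum_type, Fintype.sum_sum_type]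
    by_cases hm : (s : α × β × γ) ∈ Mstar
    · simp only [bmAlloc, ElemIn, hm, and_true, not_true_eq_false, and_false,
        if_false, Finset.sum_const, Finset.sum_ite_eq, Finset.mem_univ, if_true,
        smul_zero]
      norm_num
    · simp only [bmAlloc, ElemIn, hm, and_false, not_false_eq_true, and_true,
        if_false, Finset.sum_const, smul_zero, Finset.sum_ite_eq', Finset.mem_univ,
        if_true]
      norm_num
  have hfeas' : FixedPriceFeasible (mkBudget S) (mkVal S) (bmAlloc S Mstar) (bmPay S Mstar) (bmPrice S Mstar) := by
    refine ⟨?_, ?_, fun i s => rfl, ?_, ?_, ?_⟩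
    · intro i s
      rcases i with e | t <;> simp only [bmAlloc] <;> split_ifs <;> norm_num
    · intro s; simp only [bmPrice]; split_ifs <;> norm_num
    · intro s; exact le_of_eq (hsum1 s)
    · intro i
      rcases i with e | t
      · have heq : ∀ s : {s // s ∈ S}, bmPay S Mstar (Sum.inl e) s =
            if ElemIn e s.1 ∧ (s : α × β × γ) ∈ Mstar then (1/3 : ℝ) else 0 := by
          intro s
          simp only [bmPay, bmPrice, bmAlloc]
          by_cases h : ElemIn e s.1 ∧ (s : α × β × γ) ∈ Mstar
          · simp [h, h.2]
          · simp [h]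
        rw [Finset.sum_congr rfl fun s _ => heq s, ← Finset.sum_filter,
          Finset.sum_const]
        have hcard : (Finset.univ.filter fun s : {s // s ∈ S} =>
            ElemIn e s.1 ∧ (s : α × β × γ) ∈ Mstar).card ≤ 1 := by
          refine Finset.card_le_one.2 fun u hu v hv => ?_
          obtain ⟨-, hue, huM⟩ := Finset.mem_filter.1 hu
          obtain ⟨-, hve, hvM⟩ := Finset.mem_filter.1 hv
          by_contra hne
          have hne' : (u : α × β × γ) ≠ (v : α × β × γ) :=
            fun h => hne (Subtype.ext h)
          have hd := hMstar.2 _ huM _ hvM hne'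
          rcases e with a | eb | c
          · exact hd.1 (hue.trans hve.symm)
          · exact hd.2.1 (hue.trans hve.symm)
          · exact hd.2.2 (hue.trans hve.symm)
        have hle : ((Finset.univ.filter fun s : {s // s ∈ S} =>
            ElemIn e s.1 ∧ (s : α × β × γ) ∈ Mstar).card : ℝ) * (1/3) ≤ 1 * (1/3) := by
          apply mul_le_mul_of_nonneg_right _ (by norm_num)
          exact_mod_cast hcard
        rw [nsmul_eq_mul]
        calc _ ≤ 1 * (1/3 : ℝ) := hle
          _ = mkBudget S (Sum.inl e) := by norm_num [mkBudget]
      · have heq : ∀ s : {s // s ∈ S}, bmPay S Mstar (Sum.inr t) s =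
            if t = s then (if (s : α × β × γ) ∉ Mstar then (2/3 : ℝ) else 0) else 0 := by
          intro s
          simp only [bmPay, bmPrice, bmAlloc]
          by_cases h1 : t = s
          · by_cases h2 : (s : α × β × γ) ∉ Mstar
            · simp [h1, h2]
            · simp [h1, h2, not_not.1 h2]
          · simp [h1]
        rw [Finset.sum_congr rfl fun s _ => heq s, Finset.sum_ite_eq]
        simp only [Finset.mem_univ, if_true, mkBudget]
        split_ifs <;> norm_num
    · intro i s
      rcases i with e | t
      · simp only [bmPay, bmPrice, bmAlloc, mkVal]
        by_cases h : ElemIn e s.1 ∧ (s : α × β × γ) ∈ Mstar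
        · simp [h, h.1, h.2]
        · simp only [h, if_false]
          by_cases h2 : ElemIn e s.1 <;> simp [h2]
      · simp only [bmPay, bmPrice, bmAlloc, mkVal]
        by_cases h : t = s ∧ (s : α × β × γ) ∉ Mstar
        · simp [h, h.1, h.2]
        · simp only [h, if_false, mul_zero]
          by_cases h2 : t = s <;> simp [h2]
  -- revenue of the benchmark
  have hcardM : (Finset.univ.filter fun s : {s // s ∈ S} =>
      (s : α × β × γ) ∈ Mstar).card = Mstar.card := by
    refine Finset.card_bij (fun s _ => (s : α × β × γ)) ?_ ?_ ?_
    · intro a ha; exact (Finset.mem_filter.1 ha).2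
    · intro a _ c _ h; exact Subtype.ext h
    · intro t ht; exact ⟨⟨t, hMstar.1 ht⟩, Finset.mem_filter.2 ⟨Finset.mem_univ _, ht⟩, rfl⟩
  have hrev' : ∑ i, ∑ s, bmPay S Mstar i s = 2/3 * (S.card : ℝ) + 1/3 * (Mstar.card : ℝ) := by
    rw [Finset.sum_comm]
    have h1 : ∀ s : {s // s ∈ S}, ∑ i, bmPay S Mstar i s = bmPrice S Mstar s := by
      intro s
      rw [show (∑ i, bmPay S Mstar i s) = bmPrice S Mstar s * ∑ i, bmAlloc S Mstar i s by rw [Finset.mul_sum]; rfl,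
        hsum1 s, mul_one]
    calc ∑ s, ∑ i, bmPay S Mstar i s = ∑ s : {s // s ∈ S}, bmPrice S Mstar s :=
          Finset.sum_congr rfl fun s _ => h1 s
      _ = ∑ s : {s // s ∈ S},
            (2/3 + 1/3 * (if (s : α × β × γ) ∈ Mstar then (1:ℝ) else 0)) := by
          refine Finset.sum_congr rfl fun s _ => ?_
          simp only [bmPrice]; split_ifs <;> norm_num
      _ = 2/3 * (S.card : ℝ) + 1/3 * (Mstar.card : ℝ) := by
          rw [Finset.sum_add_distrib, Finset.sum_const, ← Finset.mul_sum,
            Finset.sum_boole, hcardS, hcardM]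
          push_cast
          ring
  have hlb := happrox (bmAlloc S Mstar) (bmPay S Mstar) (bmPrice S Mstar) hfeas'
  rw [hrev'] at hlb
  have hm4' : (S.card : ℝ) ≤ 4 * (Mstar.card : ℝ) := by exact_mod_cast hm4
  have hprod : (1 - ρ) * (S.card : ℝ) ≤ (1 - ρ) * (4 * (Mstar.card : ℝ)) :=
    mul_le_mul_of_nonneg_left hm4' (by linarith)
  nlinarith [hub, hlb, hprod]
end

section
/- Consider a market with buyers i ∈ S and m divisible goods, where buyer i has valuation v_{ij} ≥ 0 per unit of good j. Let x* be an allocation with x*_{ij} ≥ 0 and Σ_{i∈S} x*_{ij} ≤ 1 for every good j, and let o_{ij} ≥ 0 be payments with o_{ij} ≤ v_{ij}·x*_{ij} for all i, j; write o_i := Σ_j o_{ij}. Let (x̂, b̂, p̂, α̂) be a First-Price Pacing Equilibrium of the market in which buyer i has any budget B̂_i satisfying B̂_i ≥ o_i. Then the FPPE revenue satisfies Σ_{i∈S} Σ_{j=1}^m p̂_j·x̂_{ij} ≥ (1/2)·Σ_{i∈S} o_i. -/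
open Finset

/-- If `(x*, o)` is a feasible allocation/payment pair (individually rational,
with total supply at most one unit per good), and `(x̂, b̂, p̂, α̂)` is an FPPE for
any budgets `B̂` with `B̂ i ≥ o_i := Σ_j o i j`, then the FPPE revenue is at least
half of `Σ_i o_i`. -/
theorem fppe_half_of_payments {n m : ℕ} (v : Fin n → Fin m → ℝ)
    (hv : ∀ i j, 0 ≤ v i j)
    (xstar o : Fin n → Fin m → ℝ)
    (hxs : ∀ i j, 0 ≤ xstar i j) (hsupply : ∀ j, ∑ i, xstar i j ≤ 1)
    (ho : ∀ i j, 0 ≤ o i j) (hIR : ∀ i j, o i j ≤ v i j * xstar i j)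
    (Bhat : Fin n → ℝ) (hBhat : ∀ i, ∑ j, o i j ≤ Bhat i)
    (xh bh : Fin n → Fin m → ℝ) (ph : Fin m → ℝ) (αh : Fin n → ℝ)
    (hfppe : IsFPPE Bhat v xh bh ph αh) :
    ∑ i, ∑ j, ph j * xh i j ≥ (1 / 2) * ∑ i, ∑ j, o i j := by
  classical
  obtain ⟨hx0, hp0, hα, hb, hsup, hbud, hcomp, hmax, hex, hfull, hsat⟩ := hfppe
  set REV := ∑ i, ∑ j, ph j * xh i j with hREV
  have hREVp : REV = ∑ j, ph j := by
    rw [hREV, Finset.sum_comm]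
    refine Finset.sum_congr rfl fun j _ => ?_
    rw [← Finset.mul_sum]
    rcases eq_or_lt_of_le (hp0 j) with h | h
    · simp [← h]
    · rw [hfull j h, mul_one]
  have hspend0 : ∀ i, 0 ≤ ∑ j, ph j * xh i j := fun i =>
    Finset.sum_nonneg fun j _ => mul_nonneg (hp0 j) (hx0 i j)
  set S1 := Finset.univ.filter (fun i => αh i = 1) with hS1
  have hA : ∑ i ∈ S1, ∑ j, o i j ≤ ∑ j, ph j := by
    calc ∑ i ∈ S1, ∑ j, o i j ≤ ∑ i ∈ S1, ∑ j, ph j * xstar i j := by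
          refine Finset.sum_le_sum fun i hi => Finset.sum_le_sum fun j _ => ?_
          have h1 : αh i = 1 := (Finset.mem_filter.mp hi).2
          calc o i j ≤ v i j * xstar i j := hIR i j
            _ ≤ ph j * xstar i j := by
                refine mul_le_mul_of_nonneg_right ?_ (hxs i j)
                have := hmax i j; rw [h1, one_mul] at this; exact this
      _ = ∑ j, ph j * ∑ i ∈ S1, xstar i j := by
          rw [Finset.sum_comm]; simp [Finset.mul_sum]
      _ ≤ ∑ j, ph j := by
          refine Finset.sum_le_sum fun j _ => ?_
          calc ph j * ∑ i ∈ S1, xstar i j ≤ ph j * 1 := by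
                refine mul_le_mul_of_nonneg_left ?_ (hp0 j)
                exact le_trans (Finset.sum_le_sum_of_subset_of_nonneg
                  (Finset.filter_subset _ _) (fun i _ _ => hxs i j)) (hsupply j)
            _ = ph j := mul_one _
  have hB : ∑ i ∈ Finset.univ.filter (fun i => ¬ αh i = 1), ∑ j, o i j ≤ REV := by
    calc ∑ i ∈ Finset.univ.filter (fun i => ¬ αh i = 1), ∑ j, o i j
        ≤ ∑ i ∈ Finset.univ.filter (fun i => ¬ αh i = 1), ∑ j, ph j * xh i j := by
          refine Finset.sum_le_sum fun i hi => ?_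
          have h1 : ¬ αh i = 1 := (Finset.mem_filter.mp hi).2
          have heq : ∑ j, ph j * xh i j = Bhat i := by
            rcases lt_or_eq_of_le (hbud i) with h | h
            · exact absurd (hsat i h) h1
            · exact h
          rw [heq]; exact hBhat i
      _ ≤ REV := by
          rw [hREV]
          exact Finset.sum_le_sum_of_subset_of_nonneg (Finset.subset_univ _)
            (fun i _ _ => hspend0 i)
  have hsplit := Finset.sum_filter_add_sum_filter_not Finset.univ
    (fun i => αh i = 1) (fun i => ∑ j, o i j)
  have htot : ∑ i, ∑ j, o i j ≤ 2 * REV := by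
    rw [← hsplit]
    have := hA
    rw [← hREVp] at this
    linarith
  linarith
end

section
/- Let (x, b, p, α) be a First-Price Pacing Equilibrium of a market with n buyers and m goods for budgets B = (B_1,…,B_n), and fix a buyer i with pacing multiplier α_i = 1. Define the budget vector B' by B'_j = B_j for every j ≠ i and B'_i ≥ B_i (buyer i's budget is increased). Then (x, b, p, α) is also a First-Price Pacing Equilibrium for the budgets B'. -/
open Finset

/-- Increasing the budget of a buyer whose pacing multiplier is `1` preserves
the FPPE. -/
theorem fppe_budget_increase_unpaced {n m : ℕ}
    (B B' : Fin n → ℝ) (v : Fin n → Fin m → ℝ)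
    (x b : Fin n → Fin m → ℝ) (p : Fin m → ℝ) (α : Fin n → ℝ)
    (hfppe : IsFPPE B v x b p α) (i : Fin n)
    (hα : α i = 1)
    (hB' : ∀ j, j ≠ i → B' j = B j) (hBi : B i ≤ B' i) :
    IsFPPE B' v x b p α := by
  obtain ⟨h1, h2, h3, h4, h5, h6, h7, h8, h9, h10, h11⟩ := hfppe
  refine ⟨h1, h2, h3, h4, h5, ?_, h7, h8, h9, h10, ?_⟩
  · intro k
    by_cases hk : k = i
    · subst hk; exact (h6 k).trans hBi
    · rw [hB' k hk]; exact h6 k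
  · intro k hk
    by_cases hki : k = i
    · subst hki; exact hα
    · exact h11 k (by rwa [hB' k hki] at hk)
end

section
/- Consider the online setting with T rounds, m divisible goods renewed each round, and n buyers, where buyer i is active on [s_i, t_i], has valuations v_{ij} ≥ 0 and budget B_i ≥ 0. Let the Online FPPE algorithm produce, at each round t, a First-Price Pacing Equilibrium (x^t, b^t, p^t, α^t) over the active buyers S(t) with remaining budgets B_i^t (where B_i^{s_i} = B_i and B_i^{t+1} = B_i^t − Σ_j p_j^t·x_{ij}^t). Then for every feasible offline variable-price solution with payments o^t_{ij}, the total revenue of Online FPPE is at least one quarter of the offline revenue: Σ_{t=1}^T Σ_{i∈S(t)} Σ_{j=1}^m p_j^t·x_{ij}^t ≥ (1/4)·Σ_{t=1}^T Σ_{i∈S(t)} Σ_{j=1}^m o^t_{ij}. That is, Online FPPE is a 1/4-competitive algorithm with respect to the optimal offline revenue with variable unit prices. -/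
open Finset

/-- A First-Price Pacing Equilibrium over a set `A` of active buyers with budgets
`Bud`, valuations `v`: allocations `x`, payments `b`, prices `p`, multipliers `α`.
Inactive buyers receive nothing. -/
def IsFPPEOn {n m : ℕ} (A : Finset (Fin n)) (Bud : Fin n → ℝ)
    (v : Fin n → Fin m → ℝ) (x b : Fin n → Fin m → ℝ)
    (p : Fin m → ℝ) (α : Fin n → ℝ) : Prop :=
  (∀ i j, 0 ≤ x i j) ∧
  (∀ i ∉ A, ∀ j, x i j = 0) ∧
  (∀ j, 0 ≤ p j) ∧
  (∀ i ∈ A, 0 ≤ α i ∧ α i ≤ 1) ∧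
  (∀ i j, b i j = p j * x i j) ∧
  (∀ j, ∑ i ∈ A, x i j ≤ 1) ∧
  (∀ i ∈ A, ∑ j, p j * x i j ≤ Bud i) ∧
  (∀ i ∈ A, ∀ j, 0 < x i j → p j = α i * v i j) ∧
  (∀ i ∈ A, ∀ j, α i * v i j ≤ p j) ∧
  (∀ j, ∃ i ∈ A, p j = α i * v i j) ∧
  (∀ j, 0 < p j → ∑ i ∈ A, x i j = 1) ∧
  (∀ i ∈ A, ∑ j, p j * x i j < Bud i → α i = 1)

/-- The set of buyers active at round `t`: those with `s i ≤ t ≤ e i`. -/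
def activeSet {n : ℕ} (s e : Fin n → ℕ) (t : ℕ) : Finset (Fin n) :=
  Finset.univ.filter fun i => s i ≤ t ∧ t ≤ e i

/-- A feasible offline variable-price solution for the online instance:
allocations `xo` and payments `o` per round, individually rational, supply
feasible each round, zero for inactive buyers, and budget feasible overall. -/
def OfflineFeasible {n m : ℕ} (T : ℕ) (s e : Fin n → ℕ) (B : Fin n → ℝ)
    (v : Fin n → Fin m → ℝ) (xo o : ℕ → Fin n → Fin m → ℝ) : Prop :=
  (∀ t i j, 0 ≤ xo t i j) ∧
  (∀ t i j, 0 ≤ o t i j) ∧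
  (∀ t, 1 ≤ t → t ≤ T → ∀ j, ∑ i, xo t i j ≤ 1) ∧
  (∀ t i j, o t i j ≤ v i j * xo t i j) ∧
  (∀ t i, ¬ (s i ≤ t ∧ t ≤ e i) → ∀ j, xo t i j = 0 ∧ o t i j = 0) ∧
  (∀ i, ∑ t ∈ Finset.Icc (s i) (e i), ∑ j, o t i j ≤ B i)


private lemma sum_Icc_telescope (g : ℕ → ℝ) : ∀ a b : ℕ, a ≤ b + 1 →
    ∑ t ∈ Finset.Icc a b, (g t - g (t + 1)) = g a - g (b + 1) := by
  intro a b
  induction b with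
  | zero =>
    intro h
    interval_cases a
    · simp
    · simp
  | succ b ih =>
    intro h
    rcases Nat.lt_or_ge a (b + 2) with h1 | h1
    · have ha : a ≤ b + 1 := by omega
      rw [Finset.sum_Icc_succ_top ha, ih ha]
      ring
    · have : a = b + 2 := by omega
      subst this
      rw [Finset.Icc_eq_empty (by omega)]
      simp

/-- Online FPPE is `1/4`-competitive: its total revenue is at least one quarter
of the revenue of any feasible offline solution with variable unit prices. -/
theorem online_fppe_quarter_competitive {n m T : ℕ}
    (s e : Fin n → ℕ) (hse : ∀ i, 1 ≤ s i ∧ s i ≤ e i ∧ e i ≤ T)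
    (B : Fin n → ℝ) (hB : ∀ i, 0 ≤ B i)
    (v : Fin n → Fin m → ℝ) (hv : ∀ i j, 0 ≤ v i j)
    -- the Online FPPE algorithm
    (x b : ℕ → Fin n → Fin m → ℝ) (p : ℕ → Fin m → ℝ) (α : ℕ → Fin n → ℝ)
    (Brem : Fin n → ℕ → ℝ)
    (hinit : ∀ i, Brem i (s i) = B i)
    (hrec : ∀ i t, s i ≤ t → t ≤ e i →
      Brem i (t + 1) = Brem i t - ∑ j, p t j * x t i j)
    (halg : ∀ t, 1 ≤ t → t ≤ T →
      IsFPPEOn (activeSet s e t) (fun i => Brem i t) v (x t) (b t) (p t) (α t))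
    -- a feasible offline variable-price solution
    (xo o : ℕ → Fin n → Fin m → ℝ)
    (hoff : OfflineFeasible T s e B v xo o) :
    ∑ t ∈ Finset.Icc 1 T, ∑ i ∈ activeSet s e t, ∑ j, p t j * x t i j ≥
      (1 / 4) * ∑ t ∈ Finset.Icc 1 T, ∑ i ∈ activeSet s e t, ∑ j, o t i j := by
  classical
  obtain ⟨hxo0, ho0, hxosup, hIR, hinact, hbud⟩ := hoff
  have hmemA : ∀ t (i : Fin n), i ∈ activeSet s e t ↔ s i ≤ t ∧ t ≤ e i := by
    intro t i; simp [activeSet]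
  have hact : ∀ (i : Fin n) t, s i ≤ t → t ≤ e i → 1 ≤ t ∧ t ≤ T := by
    intro i t h1 h2
    exact ⟨le_trans (hse i).1 h1, le_trans h2 (hse i).2.2⟩
  have hp0 : ∀ t, 1 ≤ t → t ≤ T → ∀ j, 0 ≤ p t j := by
    intro t h1 h2; exact (halg t h1 h2).2.2.1
  have hx0 : ∀ t, 1 ≤ t → t ≤ T → ∀ i j, 0 ≤ x t i j := by
    intro t h1 h2; exact (halg t h1 h2).1
  have hspend0 : ∀ t, 1 ≤ t → t ≤ T → ∀ i, 0 ≤ ∑ j, p t j * x t i j := by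
    intro t h1 h2 i
    exact Finset.sum_nonneg fun j _ => mul_nonneg (hp0 t h1 h2 j) (hx0 t h1 h2 i j)
  have hbudr : ∀ (i : Fin n) t, s i ≤ t → t ≤ e i → ∑ j, p t j * x t i j ≤ Brem i t := by
    intro i t h1 h2
    obtain ⟨h1', h2'⟩ := hact i t h1 h2
    obtain ⟨c1, c2, c3, c4, c5, c6, c7, c8, c9, c10, c11, c12⟩ := halg t h1' h2'
    exact c7 i ((hmemA t i).2 ⟨h1, h2⟩)
  have hBstep : ∀ (i : Fin n) t, s i ≤ t → t ≤ e i → Brem i (t + 1) ≤ Brem i t := by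
    intro i t h1 h2
    rw [hrec i t h1 h2]
    have := hspend0 t (hact i t h1 h2).1 (hact i t h1 h2).2 i
    linarith
  have hmono : ∀ (i : Fin n) (u d : ℕ), s i ≤ u → u + d ≤ e i + 1 →
      Brem i (u + d) ≤ Brem i u := by
    intro i u d
    induction d with
    | zero => intro _ _; simp
    | succ d ih =>
      intro h1 h2
      have h3 : u + d ≤ e i := by omega
      have h4 := hBstep i (u + d) (by omega) h3
      have h5 := ih h1 (by omega)
      show Brem i ((u + d) + 1) ≤ Brem i u
      linarith
  have hBfin0 : ∀ i : Fin n, 0 ≤ Brem i (e i + 1) := by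
    intro i
    rw [hrec i (e i) (hse i).2.1 le_rfl]
    have := hbudr i (e i) (hse i).2.1 le_rfl
    linarith
  have hspendtot : ∀ i : Fin n, ∑ t ∈ Finset.Icc (s i) (e i), ∑ j, p t j * x t i j
      = B i - Brem i (e i + 1) := by
    intro i
    have h1 : ∀ t ∈ Finset.Icc (s i) (e i),
        ∑ j, p t j * x t i j = Brem i t - Brem i (t + 1) := by
      intro t ht
      rw [Finset.mem_Icc] at ht
      rw [hrec i t ht.1 ht.2]; ring
    rw [Finset.sum_congr rfl h1,
      sum_Icc_telescope (Brem i) (s i) (e i) (le_trans (hse i).2.1 (Nat.le_succ _)),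
      hinit i]
  -- Fubini
  have hfub : ∀ f : ℕ → Fin n → ℝ,
      ∑ t ∈ Finset.Icc 1 T, ∑ i ∈ activeSet s e t, f t i
        = ∑ i : Fin n, ∑ t ∈ Finset.Icc (s i) (e i), f t i := by
    intro f
    have h1 : ∀ t, ∑ i ∈ activeSet s e t, f t i
        = ∑ i : Fin n, if s i ≤ t ∧ t ≤ e i then f t i else 0 := by
      intro t
      rw [activeSet, Finset.sum_filter]
    simp_rw [h1]
    rw [Finset.sum_comm]
    apply Finset.sum_congr rfl
    intro i _
    rw [← Finset.sum_filter]
    apply Finset.sum_congr _ (fun _ _ => rfl)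
    ext t
    obtain ⟨g1, g2, g3⟩ := hse i
    simp only [Finset.mem_filter, Finset.mem_Icc]
    omega
  set REV := ∑ t ∈ Finset.Icc 1 T, ∑ i ∈ activeSet s e t, ∑ j, p t j * x t i j with hREV
  have hREV0 : 0 ≤ REV := by
    apply Finset.sum_nonneg
    intro t ht
    rw [Finset.mem_Icc] at ht
    exact Finset.sum_nonneg fun i _ => hspend0 t ht.1 ht.2 i
  have hREVeq : REV = ∑ i : Fin n, (B i - Brem i (e i + 1)) := by
    rw [hREV, hfub]
    exact Finset.sum_congr rfl fun i _ => hspendtot i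
  have hspendtot0 : ∀ i : Fin n, 0 ≤ B i - Brem i (e i + 1) := by
    intro i
    rw [← hspendtot i]
    apply Finset.sum_nonneg
    intro t ht
    rw [Finset.mem_Icc] at ht
    exact hspend0 t (hact i t ht.1 ht.2).1 (hact i t ht.1 ht.2).2 i
  -- Part 1 : budget-exhausting buyers
  have hpart1 : ∑ i ∈ Finset.univ.filter (fun i : Fin n => Brem i (e i + 1) ≤ 0),
      (∑ t ∈ Finset.Icc (s i) (e i), ∑ j, o t i j) ≤ REV := by
    rw [hREVeq]
    calc ∑ i ∈ Finset.univ.filter (fun i : Fin n => Brem i (e i + 1) ≤ 0),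
          (∑ t ∈ Finset.Icc (s i) (e i), ∑ j, o t i j)
        ≤ ∑ i ∈ Finset.univ.filter (fun i : Fin n => Brem i (e i + 1) ≤ 0), B i :=
          Finset.sum_le_sum fun i _ => hbud i
      _ = ∑ i ∈ Finset.univ.filter (fun i : Fin n => Brem i (e i + 1) ≤ 0),
            (B i - Brem i (e i + 1)) := by
          apply Finset.sum_congr rfl
          intro i hi
          rw [Finset.mem_filter] at hi
          have : Brem i (e i + 1) = 0 := le_antisymm hi.2 (hBfin0 i)
          rw [this]; ring
      _ ≤ ∑ i : Fin n, (B i - Brem i (e i + 1)) :=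
          Finset.sum_le_sum_of_subset_of_nonneg (Finset.filter_subset _ _)
            (fun i _ _ => hspendtot0 i)
  -- never-paced buyers have multiplier 1 at every active round
  have halpha1 : ∀ i : Fin n, ¬ Brem i (e i + 1) ≤ 0 → ∀ t, s i ≤ t → t ≤ e i →
      α t i = 1 := by
    intro i hi t h1 h2
    have hpos : 0 < Brem i (e i + 1) := lt_of_not_ge hi
    have hm := hmono i (t + 1) (e i - t) (by omega) (by omega)
    have heq : (t + 1) + (e i - t) = e i + 1 := by omega
    rw [heq] at hm
    have hlt : ∑ j, p t j * x t i j < Brem i t := by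
      have := hrec i t h1 h2
      linarith
    obtain ⟨h1', h2'⟩ := hact i t h1 h2
    obtain ⟨c1, c2, c3, c4, c5, c6, c7, c8, c9, c10, c11, c12⟩ := halg t h1' h2'
    exact c12 i ((hmemA t i).2 ⟨h1, h2⟩) hlt
  -- per-round revenue equals total price
  have hprev : ∀ t, 1 ≤ t → t ≤ T →
      ∑ j, p t j = ∑ i ∈ activeSet s e t, ∑ j, p t j * x t i j := by
    intro t h1 h2
    obtain ⟨c1, c2, c3, c4, c5, c6, c7, c8, c9, c10, c11, c12⟩ := halg t h1 h2
    rw [Finset.sum_comm]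
    apply Finset.sum_congr rfl
    intro j _
    rcases eq_or_lt_of_le (c3 j) with h | h
    · rw [← h]; simp
    · rw [← Finset.mul_sum, c11 j h, mul_one]
  -- Part 2 : never-paced buyers
  have hpart2 : ∑ i ∈ Finset.univ.filter (fun i : Fin n => ¬ Brem i (e i + 1) ≤ 0),
      (∑ t ∈ Finset.Icc (s i) (e i), ∑ j, o t i j) ≤ REV := by
    have hstep1 : ∑ i ∈ Finset.univ.filter (fun i : Fin n => ¬ Brem i (e i + 1) ≤ 0),
        (∑ t ∈ Finset.Icc (s i) (e i), ∑ j, o t i j)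
        ≤ ∑ i ∈ Finset.univ.filter (fun i : Fin n => ¬ Brem i (e i + 1) ≤ 0),
            (∑ t ∈ Finset.Icc (s i) (e i), ∑ j, p t j * xo t i j) := by
      apply Finset.sum_le_sum
      intro i hi
      rw [Finset.mem_filter] at hi
      apply Finset.sum_le_sum
      intro t ht
      rw [Finset.mem_Icc] at ht
      apply Finset.sum_le_sum
      intro j _
      have ha1 : α t i = 1 := halpha1 i hi.2 t ht.1 ht.2
      obtain ⟨h1', h2'⟩ := hact i t ht.1 ht.2
      obtain ⟨c1, c2, c3, c4, c5, c6, c7, c8, c9, c10, c11, c12⟩ := halg t h1' h2'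
      have hv_le : v i j ≤ p t j := by
        have h9 := c9 i ((hmemA t i).2 ⟨ht.1, ht.2⟩) j
        rw [ha1, one_mul] at h9
        exact h9
      calc o t i j ≤ v i j * xo t i j := hIR t i j
        _ ≤ p t j * xo t i j := mul_le_mul_of_nonneg_right hv_le (hxo0 t i j)
    have hstep2 : ∑ i ∈ Finset.univ.filter (fun i : Fin n => ¬ Brem i (e i + 1) ≤ 0),
        (∑ t ∈ Finset.Icc (s i) (e i), ∑ j, p t j * xo t i j)
        ≤ ∑ i : Fin n, ∑ t ∈ Finset.Icc 1 T, ∑ j, p t j * xo t i j := by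
      have hnn : ∀ (i : Fin n), ∀ t ∈ Finset.Icc 1 T, 0 ≤ ∑ j, p t j * xo t i j := by
        intro i t ht
        rw [Finset.mem_Icc] at ht
        exact Finset.sum_nonneg fun j _ => mul_nonneg (hp0 t ht.1 ht.2 j) (hxo0 t i j)
      calc ∑ i ∈ Finset.univ.filter (fun i : Fin n => ¬ Brem i (e i + 1) ≤ 0),
            (∑ t ∈ Finset.Icc (s i) (e i), ∑ j, p t j * xo t i j)
          ≤ ∑ i ∈ Finset.univ.filter (fun i : Fin n => ¬ Brem i (e i + 1) ≤ 0),
              (∑ t ∈ Finset.Icc 1 T, ∑ j, p t j * xo t i j) := by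
            apply Finset.sum_le_sum
            intro i _
            apply Finset.sum_le_sum_of_subset_of_nonneg
            · intro t ht
              rw [Finset.mem_Icc] at ht ⊢
              obtain ⟨g1, g2, g3⟩ := hse i
              omega
            · intro t ht _
              exact hnn i t ht
        _ ≤ ∑ i : Fin n, ∑ t ∈ Finset.Icc 1 T, ∑ j, p t j * xo t i j :=
            Finset.sum_le_sum_of_subset_of_nonneg (Finset.filter_subset _ _)
              (fun i _ _ => Finset.sum_nonneg (hnn i))
    have hstep3 : ∑ i : Fin n, ∑ t ∈ Finset.Icc 1 T, ∑ j, p t j * xo t i j ≤ REV := by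
      rw [Finset.sum_comm]
      rw [hREV]
      apply Finset.sum_le_sum
      intro t ht
      rw [Finset.mem_Icc] at ht
      rw [← hprev t ht.1 ht.2]
      rw [Finset.sum_comm]
      apply Finset.sum_le_sum
      intro j _
      rw [← Finset.mul_sum]
      calc p t j * ∑ i : Fin n, xo t i j ≤ p t j * 1 :=
            mul_le_mul_of_nonneg_left (hxosup t ht.1 ht.2 j) (hp0 t ht.1 ht.2 j)
        _ = p t j := mul_one _
    linarith
  have hOFF : ∑ t ∈ Finset.Icc 1 T, ∑ i ∈ activeSet s e t, ∑ j, o t i j ≤ 2 * REV := by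
    rw [hfub (fun t i => ∑ j, o t i j)]
    rw [← Finset.sum_filter_add_sum_filter_not Finset.univ
      (fun i : Fin n => Brem i (e i + 1) ≤ 0) (fun i => ∑ t ∈ Finset.Icc (s i) (e i), ∑ j, o t i j)]
    linarith
  linarith
end

section
/- Let v_{ij} : [0,1] → ℝ (for i ∈ [n], j ∈ [m]) be differentiable, concave, non-decreasing functions with v_{ij}(0) = 0 and v'_{ij}(1) > 0, and let B_i > 0 be budgets. Suppose (x, u, δ) with x_{ij} ≥ 0, u_i > 0, δ_i ≥ 0 and (α, p) with 0 < α_i ≤ 1, p_j ≥ 0 satisfy the KKT conditions of the Eisenberg–Gale primal/dual pair: (i) B_i/u_i = α_i; (ii) α_i·v'_{ij}(x_{ij}) ≤ p_j, with equality whenever x_{ij} > 0; (iii) α_i·(u_i − Σ_j v_{ij}(x_{ij}) − δ_i) = 0; (iv) p_j·(1 − Σ_i x_{ij}) = 0; (v) δ_i·(1 − α_i) = 0; together with primal feasibility u_i ≤ Σ_j v_{ij}(x_{ij}) + δ_i and Σ_i x_{ij} ≤ 1. Then: (1) v_{ij}(x_{ij}) ≥ p_j·x_{ij} for all i, j (individual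 rationality); (2) Σ_{j=1}^m p_j·x_{ij} ≤ B_i for all i (budget feasibility); and (3) if p_j > 0 then Σ_{i=1}^n x_{ij} = 1 (market clearing). -/
open Finset

/-- KKT conditions and primal feasibility of the Eisenberg–Gale primal/dual pair
for concave valuations. -/
theorem eg_kkt_properties {n m : ℕ}
    (v v' : Fin n → Fin m → ℝ → ℝ) (B : Fin n → ℝ)
    (hB : ∀ i, 0 < B i)
    (hderiv : ∀ i j, ∀ y ∈ Set.Icc (0 : ℝ) 1,
      HasDerivWithinAt (v i j) (v' i j y) (Set.Icc 0 1) y)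
    (hconc : ∀ i j, ConcaveOn ℝ (Set.Icc 0 1) (v i j))
    (hmono : ∀ i j, MonotoneOn (v i j) (Set.Icc 0 1))
    (hzero : ∀ i j, v i j 0 = 0)
    (hderivpos : ∀ i j, 0 < v' i j 1)
    (x : Fin n → Fin m → ℝ) (u δ α : Fin n → ℝ) (p : Fin m → ℝ)
    (hx : ∀ i j, 0 ≤ x i j) (hu : ∀ i, 0 < u i) (hδ : ∀ i, 0 ≤ δ i)
    (hα : ∀ i, 0 < α i ∧ α i ≤ 1) (hp : ∀ j, 0 ≤ p j)
    (kkt1 : ∀ i, B i / u i = α i)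
    (kkt2 : ∀ i j, α i * v' i j (x i j) ≤ p j)
    (kkt2' : ∀ i j, 0 < x i j → α i * v' i j (x i j) = p j)
    (kkt3 : ∀ i, α i * (u i - ∑ j, v i j (x i j) - δ i) = 0)
    (kkt4 : ∀ j, p j * (1 - ∑ i, x i j) = 0)
    (kkt5 : ∀ i, δ i * (1 - α i) = 0)
    (pfeas1 : ∀ i, u i ≤ ∑ j, v i j (x i j) + δ i)
    (pfeas2 : ∀ j, ∑ i, x i j ≤ 1) :
    (∀ i j, v i j (x i j) ≥ p j * x i j) ∧
    (∀ i, ∑ j, p j * x i j ≤ B i) ∧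
    (∀ j, 0 < p j → ∑ i, x i j = 1) := by
  -- x i j ≤ 1
  have hxle1 : ∀ i j, x i j ≤ 1 := by
    intro i j
    calc x i j ≤ ∑ i', x i' j :=
          Finset.single_le_sum (fun i' _ => hx i' j) (Finset.mem_univ i)
      _ ≤ 1 := pfeas2 j
  have hxmem : ∀ i j, x i j ∈ Set.Icc (0:ℝ) 1 := fun i j => ⟨hx i j, hxle1 i j⟩
  -- key: v i j (x i j) ≥ v' i j (x i j) * x i j
  have hkey : ∀ i j, v' i j (x i j) * x i j ≤ v i j (x i j) := by
    intro i j
    rcases eq_or_lt_of_le (hx i j) with h0 | h0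
    · rw [← h0, hzero i j, mul_zero]
    · have hslope := (hconc i j).le_slope_of_hasDerivWithinAt
        (Set.left_mem_Icc.mpr zero_le_one) (hxmem i j) h0
        (hderiv i j (x i j) (hxmem i j))
      rw [slope_def_field, hzero i j, sub_zero, sub_zero] at hslope
      exact (le_div_iff₀ h0).mp hslope
  -- simpler: derive directly
  have hkey2 : ∀ i j, p j * x i j ≤ α i * v i j (x i j) := by
    intro i j
    rcases eq_or_lt_of_le (hx i j) with h0 | h0
    · rw [← h0, hzero i j, mul_zero, mul_zero]
    · have := kkt2' i j h0
      calc p j * x i j = α i * v' i j (x i j) * x i j := by rw [this]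
        _ = α i * (v' i j (x i j) * x i j) := by ring
        _ ≤ α i * v i j (x i j) :=
            mul_le_mul_of_nonneg_left (hkey i j) (hα i).1.le
  have hαu : ∀ i, α i * u i = B i := by
    intro i
    have := kkt1 i
    rw [div_eq_iff (hu i).ne'] at this
    linarith
  refine ⟨?_, ?_, ?_⟩
  · -- individual rationality
    intro i j
    rcases eq_or_lt_of_le (hx i j) with h0 | h0
    · rw [← h0, hzero i j, mul_zero]
    · have hv'nn : 0 ≤ v' i j (x i j) := by
        have h2 := kkt2' i j h0
        nlinarith [(hα i).1, hp j]
      have hple : p j ≤ v' i j (x i j) := by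
        have h2 := kkt2' i j h0
        nlinarith [(hα i).1, (hα i).2]
      calc p j * x i j ≤ v' i j (x i j) * x i j :=
            mul_le_mul_of_nonneg_right hple (hx i j)
        _ ≤ v i j (x i j) := hkey i j
  · -- budget feasibility
    intro i
    have hsum : ∑ j, p j * x i j ≤ α i * ∑ j, v i j (x i j) := by
      rw [Finset.mul_sum]
      exact Finset.sum_le_sum fun j _ => hkey2 i j
    have h3 : u i - ∑ j, v i j (x i j) - δ i = 0 := by
      have := kkt3 i
      rcases mul_eq_zero.mp this with h | h
      · exact absurd h (ne_of_gt (hα i).1)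
      · exact h
    have : ∑ j, v i j (x i j) = u i - δ i := by linarith
    calc ∑ j, p j * x i j ≤ α i * ∑ j, v i j (x i j) := hsum
      _ = α i * u i - α i * δ i := by rw [this]; ring
      _ ≤ α i * u i := by nlinarith [(hα i).1, hδ i]
      _ = B i := hαu i
  · -- market clearing
    intro j hpj
    have := kkt4 j
    rcases mul_eq_zero.mp this with h | h
    · exact absurd h (ne_of_gt hpj)
    · linarith
end

section
/- Let v_{ij} : [0,1] → ℝ be differentiable, concave, non-decreasing functions with v_{ij}(0) = 0 and v'_{ij}(1) > 0, let B_i > 0, and let ρ := max_{i,j} v'_{ij}(0)/v'_{ij}(1) (so ρ ≥ 1). Suppose (x, u, δ, α, p) satisfies the KKT conditions of the Eisenberg–Gale primal/dual pair: B_i/u_i = α_i with 0 < α_i ≤ 1; α_i·v'_{ij}(x_{ij}) ≤ p_j with equality whenever x_{ij} > 0; α_i·(u_i − Σ_j v_{ij}(x_{ij}) − δ_i) = 0; p_j·(1 − Σ_i x_{ij}) = 0; δ_i·(1 − α_i) = 0; with primal feasibility. Then for each buyer i at least one of the following holds: (a) x_i maximizes the quasilinear utility Σ_j (v_{ij}(x'_{ij})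 − p_j·x'_{ij}) over all x'_i ≥ 0 with Σ_j p_j·x'_{ij} ≤ B_i; or (b) buyer i spends at least a 1/ρ fraction of its budget: Σ_{j=1}^m p_j·x_{ij} ≥ B_i/ρ. -/
open Finset

lemma eg_tangent_le (f g : ℝ → ℝ)
    (hc : ConcaveOn ℝ (Set.Icc 0 1) f)
    (hd : ∀ y ∈ Set.Icc (0:ℝ) 1, HasDerivWithinAt f (g y) (Set.Icc 0 1) y)
    {a b : ℝ} (ha : a ∈ Set.Icc (0:ℝ) 1) (hb : b ∈ Set.Icc (0:ℝ) 1) :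
    f b ≤ f a + g a * (b - a) := by
  rcases lt_trichotomy a b with h | h | h
  · have h1 := hc.slope_le_of_hasDerivWithinAt ha hb h (hd a ha)
    rw [slope_def_field, div_le_iff₀ (sub_pos.2 h)] at h1
    linarith
  · subst h; simp
  · have h1 := hc.le_slope_of_hasDerivWithinAt hb ha h (hd a ha)
    rw [slope_def_field, le_div_iff₀ (sub_pos.2 h)] at h1
    linarith

lemma eg_deriv_anti (f g : ℝ → ℝ)
    (hc : ConcaveOn ℝ (Set.Icc 0 1) f)
    (hd : ∀ y ∈ Set.Icc (0:ℝ) 1, HasDerivWithinAt f (g y) (Set.Icc 0 1) y)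
    {a : ℝ} (ha : a ∈ Set.Icc (0:ℝ) 1) : g 1 ≤ g a := by
  have h1 : (1:ℝ) ∈ Set.Icc (0:ℝ) 1 := Set.mem_Icc.2 ⟨zero_le_one, le_refl 1⟩
  rcases eq_or_lt_of_le ha.2 with h | h
  · rw [h]
  · have t1 := eg_tangent_le f g hc hd ha h1
    have t2 := eg_tangent_le f g hc hd h1 ha
    nlinarith

/-- In an Eisenberg–Gale outcome for concave valuations, every buyer either gets
a quasilinear-utility-maximizing allocation at prices `p` within its budget, or
spends at least a `1/ρ` fraction of its budget, where
`ρ = max_{i,j} v'_{ij}(0) / v'_{ij}(1)`. -/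
theorem eg_utility_or_spending {n m : ℕ}
    (v v' : Fin n → Fin m → ℝ → ℝ) (B : Fin n → ℝ)
    (hB : ∀ i, 0 < B i)
    (hderiv : ∀ i j, ∀ y ∈ Set.Icc (0 : ℝ) 1,
      HasDerivWithinAt (v i j) (v' i j y) (Set.Icc 0 1) y)
    (hconc : ∀ i j, ConcaveOn ℝ (Set.Icc 0 1) (v i j))
    (hmono : ∀ i j, MonotoneOn (v i j) (Set.Icc 0 1))
    (hzero : ∀ i j, v i j 0 = 0)
    (hderivpos : ∀ i j, 0 < v' i j 1)
    (x : Fin n → Fin m → ℝ) (u δ α : Fin n → ℝ) (p : Fin m → ℝ)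
    (hx : ∀ i j, 0 ≤ x i j) (hu : ∀ i, 0 < u i) (hδ : ∀ i, 0 ≤ δ i)
    (hα : ∀ i, 0 < α i ∧ α i ≤ 1) (hp : ∀ j, 0 ≤ p j)
    (kkt1 : ∀ i, B i / u i = α i)
    (kkt2 : ∀ i j, α i * v' i j (x i j) ≤ p j)
    (kkt2' : ∀ i j, 0 < x i j → α i * v' i j (x i j) = p j)
    (kkt3 : ∀ i, α i * (u i - ∑ j, v i j (x i j) - δ i) = 0)
    (kkt4 : ∀ j, p j * (1 - ∑ i, x i j) = 0)
    (kkt5 : ∀ i, δ i * (1 - α i) = 0)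
    (pfeas1 : ∀ i, u i ≤ ∑ j, v i j (x i j) + δ i)
    (pfeas2 : ∀ j, ∑ i, x i j ≤ 1)
    (ρ : ℝ)
    (hρ : IsGreatest {r : ℝ | ∃ i j, r = v' i j 0 / v' i j 1} ρ) :
    ∀ i : Fin n,
      (∀ y : Fin m → ℝ, (∀ j, y j ∈ Set.Icc (0 : ℝ) 1) →
        ∑ j, p j * y j ≤ B i →
        ∑ j, (v i j (y j) - p j * y j) ≤ ∑ j, (v i j (x i j) - p j * x i j)) ∨
      B i / ρ ≤ ∑ j, p j * x i j := by
  intro i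
  have hxmem : ∀ j, x i j ∈ Set.Icc (0:ℝ) 1 := by
    intro j
    refine Set.mem_Icc.2 ⟨hx i j, ?_⟩
    calc x i j ≤ ∑ i', x i' j :=
          Finset.single_le_sum (fun i' _ => hx i' j) (Finset.mem_univ i)
      _ ≤ 1 := pfeas2 j
  rcases eq_or_lt_of_le (hα i).2 with hα1 | hα1
  · -- α i = 1 : quasilinear maximizer
    left
    intro y hy _
    refine Finset.sum_le_sum fun j _ => ?_
    have htan := eg_tangent_le (v i j) (v' i j) (hconc i j) (hderiv i j)
      (hxmem j) (hy j)
    have hslack : v' i j (x i j) * (y j - x i j) ≤ p j * (y j - x i j) := by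
      rcases eq_or_lt_of_le (hx i j) with h0 | h0
      · have hle : v' i j (x i j) ≤ p j := by
          have h2 := kkt2 i j; rw [hα1, one_mul] at h2; exact h2
        have hyx : 0 ≤ y j - x i j := by
          have := (hy j).1; rw [← h0]; linarith
        exact mul_le_mul_of_nonneg_right hle hyx
      · have heq : v' i j (x i j) = p j := by
          have h2 := kkt2' i j h0; rw [hα1, one_mul] at h2; exact h2
        rw [heq]
    linarith
  · -- α i < 1 : spends at least B i / ρ
    right
    have hδ0 : δ i = 0 := by
      have h5 := kkt5 i
      have : (1 - α i) ≠ 0 := by linarith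
      exact (mul_eq_zero.1 h5).resolve_right this
    have husum : u i = ∑ j, v i j (x i j) := by
      have h3 := kkt3 i
      have hαne : α i ≠ 0 := ne_of_gt (hα i).1
      have := (mul_eq_zero.1 h3).resolve_left hαne
      rw [hδ0] at this; linarith
    have hBu : B i = α i * u i := by
      exact (div_eq_iff (ne_of_gt (hu i))).1 (kkt1 i)
    have hρ1 : (1:ℝ) ≤ ρ := by
      obtain ⟨i0, j0, hre⟩ := hρ.1
      have hanti := eg_deriv_anti (v i0 j0) (v' i0 j0) (hconc i0 j0) (hderiv i0 j0)
        (Set.mem_Icc.2 ⟨le_refl (0:ℝ), zero_le_one⟩)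
      rw [hre]
      exact (one_le_div (hderivpos i0 j0)).2 hanti
    have hρ0 : (0:ℝ) < ρ := lt_of_lt_of_le one_pos hρ1
    have key : ∀ j, α i * v i j (x i j) / ρ ≤ p j * x i j := by
      intro j
      rcases eq_or_lt_of_le (hx i j) with h0 | h0
      · rw [← h0, hzero i j]
        simp
      · have heq : α i * v' i j (x i j) = p j := kkt2' i j h0
        have h0mem : (0:ℝ) ∈ Set.Icc (0:ℝ) 1 := Set.mem_Icc.2 ⟨le_refl 0, zero_le_one⟩
        have htan := eg_tangent_le (v i j) (v' i j) (hconc i j) (hderiv i j)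
          h0mem (hxmem j)
        rw [hzero i j] at htan
        have hratio : v' i j 0 / v' i j 1 ≤ ρ := hρ.2 ⟨i, j, rfl⟩
        have hd1 := hderivpos i j
        have hv0 : v' i j 0 ≤ ρ * v' i j 1 := by
          rw [div_le_iff₀ hd1] at hratio; linarith
        have hanti := eg_deriv_anti (v i j) (v' i j) (hconc i j) (hderiv i j) (hxmem j)
        have hchain : v i j (x i j) ≤ ρ * v' i j (x i j) * x i j := by
          have : v' i j 0 * x i j ≤ ρ * v' i j (x i j) * x i j := by
            have : v' i j 0 ≤ ρ * v' i j (x i j) := by nlinarith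
            nlinarith
          nlinarith [htan]
        rw [div_le_iff₀ hρ0, ← heq]
        nlinarith [(hα i).1]
    calc B i / ρ = ∑ j, α i * v i j (x i j) / ρ := by
          rw [hBu, husum, Finset.mul_sum, Finset.sum_div]
      _ ≤ ∑ j, p j * x i j := Finset.sum_le_sum fun j _ => key j
end

section
/- Let v_{ij} : [0,1] → ℝ be differentiable, concave, non-decreasing functions with v_{ij}(0) = 0 and v'_{ij}(1) > 0, let B_i > 0, and let ρ := max_{i,j} v'_{ij}(0)/v'_{ij}(1). Let (x, u, δ, α, p) satisfy the KKT conditions of the Eisenberg–Gale primal/dual pair (B_i/u_i = α_i with 0 < α_i ≤ 1; α_i·v'_{ij}(x_{ij}) ≤ p_j with equality whenever x_{ij} > 0; α_i·(u_i − Σ_j v_{ij}(x_{ij}) − δ_i) = 0; p_j·(1 − Σ_i x_{ij}) = 0; δ_i·(1 − α_i) = 0; with primal feasibility). Then for every variable-price feasible solution (x*, b*) — i.e., x*_{ij} ≥ 0, b*_{ij} ≥ 0, Σ_i x*_{ij} ≤ 1, Σ_j b*_{ij} ≤ B_i, and b*_{ij} ≤ v_{ij}(x*_{ij}) — the revenue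 of the Eisenberg–Gale outcome satisfies Σ_{i=1}^n Σ_{j=1}^m p_j·x_{ij} ≥ (1/(ρ·(ρ+1)))·Σ_{i=1}^n Σ_{j=1}^m b*_{ij}. In particular the Eisenberg–Gale outcome is a 1/(ρ(ρ+1))-approximation to the optimal revenue with variable unit prices (RMVUP). -/
open Finset

private lemma eg_aux_slope {f f' : ℝ → ℝ}
    (hc : ConcaveOn ℝ (Set.Icc 0 1) f)
    (hd : ∀ y ∈ Set.Icc (0:ℝ) 1, HasDerivWithinAt f (f' y) (Set.Icc 0 1) y)
    {a b : ℝ} (ha : a ∈ Set.Icc (0:ℝ) 1) (hb : b ∈ Set.Icc (0:ℝ) 1) (hab : a < b) :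
    f' b * (b - a) ≤ f b - f a ∧ f b - f a ≤ f' a * (b - a) := by
  have hneg : ConvexOn ℝ (Set.Icc 0 1) (-f) := hc.neg
  have h1 := hneg.le_slope_of_hasDerivWithinAt ha hb hab ((hd a ha).neg)
  have h2 := hneg.slope_le_of_hasDerivWithinAt ha hb hab ((hd b hb).neg)
  rw [slope_def_field] at h1 h2
  have hba : (0:ℝ) < b - a := sub_pos.mpr hab
  have e1 := (le_div_iff₀ hba).mp h1
  have e2 := (div_le_iff₀ hba).mp h2
  simp only [Pi.neg_apply] at e1 e2
  constructor <;> nlinarith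

private lemma eg_aux_anti {f f' : ℝ → ℝ}
    (hc : ConcaveOn ℝ (Set.Icc 0 1) f)
    (hd : ∀ y ∈ Set.Icc (0:ℝ) 1, HasDerivWithinAt f (f' y) (Set.Icc 0 1) y)
    {a b : ℝ} (ha : a ∈ Set.Icc (0:ℝ) 1) (hb : b ∈ Set.Icc (0:ℝ) 1) (hab : a ≤ b) :
    f' b ≤ f' a := by
  rcases eq_or_lt_of_le hab with rfl | h
  · exact le_refl _
  · obtain ⟨e1, e2⟩ := eg_aux_slope hc hd ha hb h
    have hba : (0:ℝ) < b - a := sub_pos.mpr h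
    nlinarith

/-- The revenue of an Eisenberg–Gale outcome for concave valuations is at least
a `1/(ρ(ρ+1))` fraction of the revenue of any variable-price feasible solution
(in particular, of the optimal RMVUP revenue), where
`ρ = max_{i,j} v'_{ij}(0) / v'_{ij}(1)`. -/
theorem eg_revenue_approx {n m : ℕ}
    (v v' : Fin n → Fin m → ℝ → ℝ) (B : Fin n → ℝ)
    (hB : ∀ i, 0 < B i)
    (hderiv : ∀ i j, ∀ y ∈ Set.Icc (0 : ℝ) 1,
      HasDerivWithinAt (v i j) (v' i j y) (Set.Icc 0 1) y)
    (hconc : ∀ i j, ConcaveOn ℝ (Set.Icc 0 1) (v i j))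
    (hmono : ∀ i j, MonotoneOn (v i j) (Set.Icc 0 1))
    (hzero : ∀ i j, v i j 0 = 0)
    (hderivpos : ∀ i j, 0 < v' i j 1)
    (x : Fin n → Fin m → ℝ) (u δ α : Fin n → ℝ) (p : Fin m → ℝ)
    (hx : ∀ i j, 0 ≤ x i j) (hu : ∀ i, 0 < u i) (hδ : ∀ i, 0 ≤ δ i)
    (hα : ∀ i, 0 < α i ∧ α i ≤ 1) (hp : ∀ j, 0 ≤ p j)
    (kkt1 : ∀ i, B i / u i = α i)
    (kkt2 : ∀ i j, α i * v' i j (x i j) ≤ p j)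
    (kkt2' : ∀ i j, 0 < x i j → α i * v' i j (x i j) = p j)
    (kkt3 : ∀ i, α i * (u i - ∑ j, v i j (x i j) - δ i) = 0)
    (kkt4 : ∀ j, p j * (1 - ∑ i, x i j) = 0)
    (kkt5 : ∀ i, δ i * (1 - α i) = 0)
    (pfeas1 : ∀ i, u i ≤ ∑ j, v i j (x i j) + δ i)
    (pfeas2 : ∀ j, ∑ i, x i j ≤ 1)
    (ρ : ℝ)
    (hρ : IsGreatest {r : ℝ | ∃ i j, r = v' i j 0 / v' i j 1} ρ)
    -- a variable-price feasible solution (x*, b*)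
    (xstar bstar : Fin n → Fin m → ℝ)
    (hxspos : ∀ i j, 0 ≤ xstar i j)
    (hbspos : ∀ i j, 0 ≤ bstar i j)
    (hssupply : ∀ j, ∑ i, xstar i j ≤ 1)
    (hsbudget : ∀ i, ∑ j, bstar i j ≤ B i)
    (hsIR : ∀ i j, bstar i j ≤ v i j (xstar i j)) :
    ∑ i, ∑ j, p j * x i j ≥ (1 / (ρ * (ρ + 1))) * ∑ i, ∑ j, bstar i j := by
  have h01 : (0:ℝ) ∈ Set.Icc (0:ℝ) 1 := by constructor <;> norm_num
  have h11 : (1:ℝ) ∈ Set.Icc (0:ℝ) 1 := by constructor <;> norm_num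
  -- memberships
  have hxmem : ∀ i j, x i j ∈ Set.Icc (0:ℝ) 1 := by
    intro i j
    refine ⟨hx i j, le_trans ?_ (pfeas2 j)⟩
    exact Finset.single_le_sum (fun i _ => hx i j) (Finset.mem_univ i)
  have hxsmem : ∀ i j, xstar i j ∈ Set.Icc (0:ℝ) 1 := by
    intro i j
    refine ⟨hxspos i j, le_trans ?_ (hssupply j)⟩
    exact Finset.single_le_sum (fun i _ => hxspos i j) (Finset.mem_univ i)
  -- derivative antitone facts
  have hanti : ∀ i j, ∀ t ∈ Set.Icc (0:ℝ) 1, v' i j 1 ≤ v' i j t := by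
    intro i j t ht
    exact eg_aux_anti (hconc i j) (hderiv i j) ht h11 ht.2
  have hρv : ∀ i j, v' i j 0 ≤ ρ * v' i j 1 := by
    intro i j
    have h := hρ.2 ⟨i, j, rfl⟩
    have := hderivpos i j
    calc v' i j 0 = (v' i j 0 / v' i j 1) * v' i j 1 := by field_simp
    _ ≤ ρ * v' i j 1 := by nlinarith
  have hρ1 : (1:ℝ) ≤ ρ := by
    obtain ⟨i, j, hij⟩ := hρ.1
    have h1 := hderivpos i j
    have h2 : v' i j 1 ≤ v' i j 0 := eg_aux_anti (hconc i j) (hderiv i j) h01 h11 zero_le_one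
    rw [hij]
    exact (one_le_div h1).mpr h2
  have hρ0 : (0:ℝ) ≤ ρ := le_trans zero_le_one hρ1
  -- v t ≤ v'(0) * t
  have hA : ∀ i j, ∀ t ∈ Set.Icc (0:ℝ) 1, v i j t ≤ v' i j 0 * t := by
    intro i j t ht
    rcases eq_or_lt_of_le ht.1 with h0 | h0
    · rw [← h0, hzero]; simp
    · have := (eg_aux_slope (hconc i j) (hderiv i j) h01 ht h0).2
      rw [hzero] at this
      linarith
  -- price sum equals EG revenue
  have hpsum : ∑ j, p j = ∑ i, ∑ j, p j * x i j := by
    rw [Finset.sum_comm]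
    apply Finset.sum_congr rfl
    intro j _
    rw [← Finset.mul_sum]
    have h4 := kkt4 j
    nlinarith [h4]
  have hRnn : 0 ≤ ∑ i, ∑ j, p j * x i j := by
    apply Finset.sum_nonneg; intro i _
    apply Finset.sum_nonneg; intro j _
    exact mul_nonneg (hp j) (hx i j)
  have hTle : ∑ i, ∑ j, p j * xstar i j ≤ ∑ i, ∑ j, p j * x i j := by
    rw [← hpsum, Finset.sum_comm]
    apply Finset.sum_le_sum
    intro j _
    rw [← Finset.mul_sum]
    calc p j * ∑ i, xstar i j ≤ p j * 1 :=
      mul_le_mul_of_nonneg_left (hssupply j) (hp j)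
    _ = p j := mul_one _
  -- per-buyer bound
  have key : ∀ i, ∑ j, bstar i j ≤
      ρ * ((∑ j, p j * x i j) + (∑ j, p j * xstar i j)) := by
    intro i
    have hT0 : 0 ≤ ∑ j, p j * xstar i j :=
      Finset.sum_nonneg fun j _ => mul_nonneg (hp j) (hxspos i j)
    have hR0 : 0 ≤ ∑ j, p j * x i j :=
      Finset.sum_nonneg fun j _ => mul_nonneg (hp j) (hx i j)
    rcases eq_or_lt_of_le (hα i).2 with hα1 | hα1
    · -- α i = 1
      have step : ∀ j, bstar i j ≤ ρ * (p j * xstar i j) := by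
        intro j
        have h1 := hsIR i j
        have h2 := hA i j _ (hxsmem i j)
        have h3 := hρv i j
        have h4 := hanti i j _ (hxmem i j)
        have h5 : v' i j (x i j) ≤ p j := by
          have := kkt2 i j; rw [hα1, one_mul] at this; linarith
        have hxs := hxspos i j
        nlinarith [mul_le_mul_of_nonneg_right h3 hxs,
          mul_le_mul_of_nonneg_left h4 (mul_nonneg hρ0 hxs),
          mul_le_mul_of_nonneg_left h5 (mul_nonneg hρ0 hxs)]
      calc ∑ j, bstar i j ≤ ∑ j, ρ * (p j * xstar i j) :=
            Finset.sum_le_sum fun j _ => step j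
        _ = ρ * ∑ j, p j * xstar i j := by rw [Finset.mul_sum]
        _ ≤ ρ * ((∑ j, p j * x i j) + (∑ j, p j * xstar i j)) := by nlinarith
    · -- α i < 1
      have hδ0 : δ i = 0 := by
        have h5 := kkt5 i
        rcases mul_eq_zero.mp h5 with h | h
        · exact h
        · exfalso; linarith
      have hui : u i = ∑ j, v i j (x i j) := by
        have h3 := kkt3 i
        rcases mul_eq_zero.mp h3 with h | h
        · exact absurd h (ne_of_gt (hα i).1)
        · rw [hδ0] at h; linarith
      have hBi : B i = α i * u i := by
        have h := kkt1 i
        rw [div_eq_iff (ne_of_gt (hu i))] at h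
        linarith
      have step : ∀ j, α i * v i j (x i j) ≤ ρ * (p j * x i j) := by
        intro j
        have h1 := hA i j _ (hxmem i j)
        have h2 := hρv i j
        have h3 := hanti i j _ (hxmem i j)
        have h4 := kkt2 i j
        have ht := hx i j
        have ha0 := (hα i).1.le
        nlinarith [mul_le_mul_of_nonneg_left h1 ha0,
          mul_le_mul_of_nonneg_left h2 (mul_nonneg ha0 ht),
          mul_le_mul_of_nonneg_left h3 (mul_nonneg (mul_nonneg hρ0 ha0) ht),
          mul_le_mul_of_nonneg_left h4 (mul_nonneg hρ0 ht)]
      calc ∑ j, bstar i j ≤ B i := hsbudget i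
        _ = α i * ∑ j, v i j (x i j) := by rw [hBi, hui]
        _ = ∑ j, α i * v i j (x i j) := by rw [Finset.mul_sum]
        _ ≤ ∑ j, ρ * (p j * x i j) := Finset.sum_le_sum fun j _ => step j
        _ = ρ * ∑ j, p j * x i j := by rw [Finset.mul_sum]
        _ ≤ ρ * ((∑ j, p j * x i j) + (∑ j, p j * xstar i j)) := by nlinarith
  -- combine
  have hmain : ∑ i, ∑ j, bstar i j ≤ 2 * ρ * ∑ i, ∑ j, p j * x i j := by
    calc ∑ i, ∑ j, bstar i j
        ≤ ∑ i, ρ * ((∑ j, p j * x i j) + (∑ j, p j * xstar i j)) :=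
          Finset.sum_le_sum fun i _ => key i
      _ = ρ * ((∑ i, ∑ j, p j * x i j) + (∑ i, ∑ j, p j * xstar i j)) := by
          rw [← Finset.mul_sum, Finset.sum_add_distrib]
      _ ≤ 2 * ρ * ∑ i, ∑ j, p j * x i j := by nlinarith [hTle]
  have hpos : (0:ℝ) < ρ * (ρ + 1) := by nlinarith
  rw [ge_iff_le, one_div, inv_mul_eq_div, div_le_iff₀ hpos]
  nlinarith [mul_nonneg (mul_nonneg hρ0 hRnn) (sub_nonneg.mpr hρ1)]
end

section
/- Let v : [0,1] → ℝ be a differentiable, concave, non-decreasing function with v(0) = 0 and v'(1) > 0, and suppose the function x ↦ x·v'(x) is non-decreasing on [0,1]. Then for every x ∈ (0,1], v(x) ≤ x·v'(x)·(1 + log(v'(0)/v'(1))). -/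
/-!
By concavity `v'` is antitone, so `v z ≤ z v'(0)` for every `z`. On `[z, x]` the hypothesis
`s v'(s) ≤ x v'(x)` gives `v'(s) ≤ x v'(x) / s`, hence `v x - v z ≤ x v'(x) log (x / z)`.
The choice `z = x v'(x) / v'(0)` balances the two bounds, giving
`v x ≤ x v'(x) (1 + log (v'(0) / v'(x)))`, and `v'(x) ≥ v'(1)` finishes.
-/

open Set Real

theorem ConcaveOn.antitoneOn_of_hasDerivWithinAt {S : Set ℝ} {f f' : ℝ → ℝ}
    (hfc : ConcaveOn ℝ S f) (hf : ∀ y ∈ S, HasDerivWithinAt f (f' y) S y) :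
    AntitoneOn f' S := by
  intro a ha b hb hab
  rcases hab.eq_or_lt with rfl | hab
  · rfl
  exact (hfc.le_slope_of_hasDerivWithinAt ha hb hab (hf b hb)).trans
    (hfc.slope_le_of_hasDerivWithinAt ha hb hab (hf a ha))

theorem sub_le_mul_log_div_of_mul_deriv_le {f f' : ℝ → ℝ} {a b c : ℝ} (ha : 0 < a) (hab : a ≤ b)
    (hf : ContinuousOn f (Icc a b)) (hf' : ∀ s ∈ Ioo a b, HasDerivAt f (f' s) s)
    (hc : ∀ s ∈ Ioo a b, s * f' s ≤ c) :
    f b - f a ≤ c * log (b / a) := by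
  have hpos : ∀ s ∈ Icc a b, 0 < s := fun s hs => ha.trans_le hs.1
  have hg : MonotoneOn (fun s => c * log s - f s) (Icc a b) := by
    refine monotoneOn_of_hasDerivWithinAt_nonneg (f' := fun s => c / s - f' s) (convex_Icc a b)
      (((continuousOn_log.mono fun s hs => (hpos s hs).ne').const_smul c).sub hf) ?_ ?_
    · rw [interior_Icc]
      intro s hs
      have hs0 := hpos s (Ioo_subset_Icc_self hs)
      exact ((((hasDerivAt_log hs0.ne').const_mul c).sub (hf' s hs)).congr_deriv
        (by field_simp)).hasDerivWithinAt
    · rw [interior_Icc]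
      intro s hs
      have hs0 := hpos s (Ioo_subset_Icc_self hs)
      rw [sub_nonneg, le_div_iff₀ hs0, mul_comm]
      exact hc s hs
  have := hg (left_mem_Icc.2 hab) (right_mem_Icc.2 hab) hab
  rw [log_div (hpos b (right_mem_Icc.2 hab)).ne' ha.ne']
  linarith

theorem concave_log_bound_general (v v' : ℝ → ℝ)
    (hderiv : ∀ y ∈ Set.Icc (0 : ℝ) 1, HasDerivWithinAt v (v' y) (Set.Icc 0 1) y)
    (hconc : ConcaveOn ℝ (Set.Icc 0 1) v)
    (hzero : v 0 = 0)
    (hderivpos : 0 < v' 1)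
    (hxv' : MonotoneOn (fun y => y * v' y) (Set.Icc 0 1)) :
    ∀ x ∈ Set.Ioc (0 : ℝ) 1,
      v x ≤ x * v' x * (1 + Real.log (v' 0 / v' 1)) := by
  rintro x ⟨hx0, hx1⟩
  have hanti := hconc.antitoneOn_of_hasDerivWithinAt hderiv
  have h0I : (0 : ℝ) ∈ Icc (0 : ℝ) 1 := left_mem_Icc.2 zero_le_one
  have h1I : (1 : ℝ) ∈ Icc (0 : ℝ) 1 := right_mem_Icc.2 zero_le_one
  have hxI : x ∈ Icc (0 : ℝ) 1 := ⟨hx0.le, hx1⟩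
  have h1x : v' 1 ≤ v' x := hanti hxI h1I hx1
  have hx0' : v' x ≤ v' 0 := hanti h0I hxI hx0.le
  have hv'x : 0 < v' x := hderivpos.trans_le h1x
  have hv'0 : 0 < v' 0 := hv'x.trans_le hx0'
  set z := x * v' x / v' 0 with hz
  have hz0 : 0 < z := by positivity
  have hzx : z ≤ x := div_le_of_le_mul₀ hv'0.le hx0.le (mul_le_mul_of_nonneg_left hx0' hx0.le)
  have hzI : Icc z x ⊆ Icc 0 1 := Icc_subset_Icc hz0.le hx1
  have htangent : v z ≤ v' 0 * z := by
    have := hconc.slope_le_of_hasDerivWithinAt h0I (hzI (left_mem_Icc.2 hzx))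
      hz0 (hderiv 0 h0I)
    rwa [slope_def_field, hzero, sub_zero, sub_zero, div_le_iff₀ hz0] at this
  have hlog : v x - v z ≤ x * v' x * log (x / z) :=
    sub_le_mul_log_div_of_mul_deriv_le hz0 hzx
      (fun s hs => (hderiv s (hzI hs)).continuousWithinAt.mono hzI)
      (fun s hs => (hderiv s (hzI (Ioo_subset_Icc_self hs))).hasDerivAt
        (Icc_mem_nhds (hz0.trans hs.1) (hs.2.trans_le hx1)))
      (fun s hs => hxv' (hzI (Ioo_subset_Icc_self hs)) hxI hs.2.le)
  have hxz : x / z = v' 0 / v' x := by rw [hz]; field_simp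
  calc v x ≤ v' 0 * z + x * v' x * log (v' 0 / v' x) := by rw [← hxz]; linarith
    _ = x * v' x * (1 + log (v' 0 / v' x)) := by rw [hz]; field_simp
    _ ≤ x * v' x * (1 + log (v' 0 / v' 1)) := by gcongr

/-- For a differentiable, concave, non-decreasing valuation `v : [0,1] → ℝ` with
`v 0 = 0`, `v' 1 > 0`, and `x ↦ x·v'(x)` non-decreasing on `[0,1]`, we have
`v x ≤ x·v'(x)·(1 + log (v'(0)/v'(1)))` for every `x ∈ (0,1]`. -/
theorem concave_log_bound (v v' : ℝ → ℝ)
    (hderiv : ∀ y ∈ Set.Icc (0 : ℝ) 1, HasDerivWithinAt v (v' y) (Set.Icc 0 1) y)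
    (hconc : ConcaveOn ℝ (Set.Icc 0 1) v)
    (hmono : MonotoneOn v (Set.Icc 0 1))
    (hzero : v 0 = 0)
    (hderivpos : 0 < v' 1)
    (hxv' : MonotoneOn (fun y => y * v' y) (Set.Icc 0 1)) :
    ∀ x ∈ Set.Ioc (0 : ℝ) 1,
      v x ≤ x * v' x * (1 + Real.log (v' 0 / v' 1)) :=
  concave_log_bound_general v v' hderiv hconc hzero hderivpos hxv'
end
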